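/- arXiv:math/0606285 — 16 statements merged into one kernel-verified Lean document; each statement's English description precedes it below -/
import Mathlib

section
/- If 𝒰 is an open γ-cover of a topological space X, then there exist infinite subsets 𝒰₁, 𝒰₂, … of 𝒰 such that the family {⋂𝒰ₙ : n ∈ ℕ} is a γ-cover of X. (Every space satisfies (Γ choose Γ)_∞.) -/
open Set

/-- `𝒰` is a γ-cover of the space: it is infinite, the whole space is not a member,
and every point belongs to all but finitely many members. -/
def IsGammaCover {α : Type*} (𝒰 : Set (Set α)) : Prop :=
  𝒰.Infinite ∧ univ ∉ 𝒰 ∧ ∀ x : α, {U ∈ 𝒰 | x ∉ U}.Finite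

/-- Every space satisfies (Γ choose Γ)_∞: every open γ-cover 𝒰 admits infinite
subsets 𝒰ₙ ⊆ 𝒰 such that {⋂𝒰ₙ : n ∈ ℕ} is a γ-cover. -/
theorem stmt0 {α : Type*} [TopologicalSpace α] (𝒰 : Set (Set α))
    (hopen : ∀ U ∈ 𝒰, IsOpen U) (hγ : IsGammaCover 𝒰) :
    ∃ 𝒱 : ℕ → Set (Set α), (∀ n, 𝒱 n ⊆ 𝒰 ∧ (𝒱 n).Infinite) ∧
      IsGammaCover (Set.range fun n => ⋂₀ 𝒱 n) := by
  classical
  obtain ⟨hinf, hnuniv, hfin⟩ := hγ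
  let e := hinf.natEmbedding
  let U : ℕ → Set α := fun n => (e n : Set α)
  have hUmem : ∀ n, U n ∈ 𝒰 := fun n => (e n).2
  have hUinj : Function.Injective U := fun a b h => e.injective (Subtype.ext h)
  -- For each x, a bound beyond which x belongs to all U k.
  have hNex : ∀ x : α, ∃ N, ∀ k, N ≤ k → x ∈ U k := by
    intro x
    have hfin' : {k : ℕ | x ∉ U k}.Finite := by
      have hsub : {k : ℕ | x ∉ U k} ⊆ U ⁻¹' {V ∈ 𝒰 | x ∉ V} := fun k hk => ⟨hUmem k, hk⟩
      exact (((hfin x).preimage hUinj.injOn)).subset hsub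
    obtain ⟨M, hM⟩ := hfin'.bddAbove
    refine ⟨M + 1, fun k hk => ?_⟩
    by_contra h
    have := hM (show k ∈ {k : ℕ | x ∉ U k} from h)
    omega
  choose N hN using hNex
  -- witnesses that each U n is proper
  have hwex : ∀ n : ℕ, ∃ x, x ∉ U n := by
    intro n
    by_contra h
    push_neg at h
    exact hnuniv ((eq_univ_of_forall h) ▸ hUmem n)
  choose w hw using hwex
  -- thinning sequence
  let g : ℕ → ℕ := fun m => Nat.rec 0 (fun m gm => max (gm + 1) (N (w gm))) m
  have hgs : ∀ m, g (m + 1) = max (g m + 1) (N (w (g m))) := fun m => rfl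
  have hgmono : StrictMono g := strictMono_nat_of_lt_succ (fun n => by rw [hgs]; omega)
  have hgN : ∀ j k, j < k → N (w (g j)) ≤ g k := by
    intro j k hjk
    calc N (w (g j)) ≤ g (j + 1) := by rw [hgs]; omega
      _ ≤ g k := hgmono.monotone hjk
  set 𝒱 : ℕ → Set (Set α) := fun n => (fun k => U (g k)) '' Ici n with h𝒱
  have hmemJ : ∀ n x, x ∈ ⋂₀ 𝒱 n ↔ ∀ k, n ≤ k → x ∈ U (g k) := by
    intro n x
    simp [h𝒱, Set.mem_sInter]
  set J : ℕ → Set α := fun n => ⋂₀ 𝒱 n with hJ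
  have hJmono : Monotone J := by
    intro a b hab
    intro x hx
    rw [hmemJ] at hx ⊢
    exact fun k hk => hx k (le_trans hab hk)
  have hwnot : ∀ n, w (g n) ∉ J n := by
    intro n hmem
    rw [hmemJ] at hmem
    exact hw (g n) (hmem n le_rfl)
  have hwin : ∀ n, w (g n) ∈ J (n + 1) := by
    intro n
    rw [hmemJ]
    intro k hk
    exact hN _ _ (hgN n k hk)
  have hJinj : Function.Injective J := by
    intro a b hab
    by_contra hne
    rcases Nat.lt_or_ge a b with h | h
    · exact hwnot a (hab ▸ hJmono h (hwin a))
    · have h' : b < a := lt_of_le_of_ne h (Ne.symm hne)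
      exact hwnot b (hab ▸ hJmono (show b + 1 ≤ a from h') (hwin b))
  refine ⟨𝒱, fun n => ⟨?_, ?_⟩, ?_, ?_, ?_⟩
  · rintro _ ⟨k, _, rfl⟩; exact hUmem _
  · show ((fun k => U (g k)) '' Ici n).Infinite
    exact (Set.Ici_infinite n).image ((hUinj.comp hgmono.injective).injOn)
  · exact Set.infinite_range_of_injective hJinj
  · rintro ⟨n, hn⟩
    have hn' : J n = univ := hn
    exact hwnot n (hn' ▸ mem_univ _)
  · intro x
    have hsub : {V ∈ Set.range (fun n => ⋂₀ 𝒱 n) | x ∉ V} ⊆ J '' Iio (N x) := by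
      rintro V ⟨⟨n, rfl⟩, hxV⟩
      refine ⟨n, ?_, rfl⟩
      by_contra h
      apply hxV
      show x ∈ ⋂₀ 𝒱 n
      rw [hmemJ]
      intro k hk
      have hn : N x ≤ n := by simpa using h
      exact hN x (g k) (le_trans hn (le_trans hk hgmono.le_apply))
    exact ((Set.finite_Iio (N x)).image J).subset hsub
end

section
/- Let X be a topological space and ℬ a surjectively derefinable family of covers of X. If every cover 𝒰 ∈ 𝒜 admits infinite subsets 𝒰₁, 𝒰₂, … with {⋂𝒰ₙ : n ∈ ℕ} ∈ ℬ, then every cover in 𝒜 has a subset belonging to ℬ. -/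
open Set

/-- `𝒰` is a cover of the space: the whole space is not a member and the union is everything. -/
def IsCover {α : Type*} (𝒰 : Set (Set α)) : Prop :=
  univ ∉ 𝒰 ∧ ⋃₀ 𝒰 = univ

/-- A family ℬ of covers is surjectively derefinable: for 𝒰 ∈ ℬ and f assigning to each
U ∈ 𝒰 an open set f(U) ≠ X with U ⊆ f(U), the family {f(U) : U ∈ 𝒰} belongs to ℬ. -/
def SurjDerefinable {α : Type*} [TopologicalSpace α] (ℬ : Set (Set (Set α))) : Prop :=
  ∀ 𝒰 ∈ ℬ, ∀ f : Set α → Set α,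
    (∀ U ∈ 𝒰, IsOpen (f U) ∧ f U ≠ univ ∧ U ⊆ f U) → f '' 𝒰 ∈ ℬ

/-- If ℬ is surjectively derefinable and every member of 𝒜 (a family of open covers)
admits infinite subsets 𝒰ₙ with {⋂𝒰ₙ : n} ∈ ℬ, then every member of 𝒜 has a subset in ℬ. -/
theorem stmt1 {α : Type*} [TopologicalSpace α]
    (𝒜 ℬ : Set (Set (Set α)))
    (h𝒜 : ∀ 𝒰 ∈ 𝒜, IsCover 𝒰 ∧ ∀ U ∈ 𝒰, IsOpen U)
    (hℬ : ∀ 𝒱 ∈ ℬ, IsCover 𝒱)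
    (hder : SurjDerefinable ℬ)
    (h : ∀ 𝒰 ∈ 𝒜, ∃ 𝒱 : ℕ → Set (Set α),
      (∀ n, 𝒱 n ⊆ 𝒰 ∧ (𝒱 n).Infinite) ∧ (Set.range fun n => ⋂₀ 𝒱 n) ∈ ℬ) :
    ∀ 𝒰 ∈ 𝒜, ∃ 𝒲 ⊆ 𝒰, 𝒲 ∈ ℬ := by
  classical
  intro 𝒰 h𝒰
  obtain ⟨𝒱, h𝒱, hrange⟩ := h 𝒰 h𝒰
  have key : ∀ W ∈ (Set.range fun n => ⋂₀ 𝒱 n), ∃ U ∈ 𝒰, W ⊆ U := by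
    rintro W ⟨n, rfl⟩
    obtain ⟨U, hU⟩ := (h𝒱 n).2.nonempty
    exact ⟨U, (h𝒱 n).1 hU, sInter_subset_of_mem hU⟩
  choose! f hf1 hf2 using key
  have hprop : ∀ W ∈ (Set.range fun n => ⋂₀ 𝒱 n),
      IsOpen (f W) ∧ f W ≠ univ ∧ W ⊆ f W := by
    intro W hW
    refine ⟨(h𝒜 𝒰 h𝒰).2 _ (hf1 W hW), ?_, hf2 W hW⟩
    intro he
    exact (h𝒜 𝒰 h𝒰).1.1 (he ▸ hf1 W hW)
  refine ⟨f '' (Set.range fun n => ⋂₀ 𝒱 n), ?_, hder _ hrange f hprop⟩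
  rintro _ ⟨W, hW, rfl⟩
  exact hf1 W hW
end

section
/- If X ⊆ {0,1}^ℕ satisfies: every clopen ω-cover 𝒰 of X admits infinite subsets 𝒱₁, 𝒱₂, … ⊆ 𝒰 with {⋂𝒱ₙ : n ∈ ℕ} a cover of X — then X has strong measure zero, in the sense that for each increasing sequence (kₙ) of natural numbers there are, for each n, basic clopen sets [s₁ⁿ], …, [sₙⁿ] with sᵢⁿ ∈ {0,1}^{kₙ}, such that X = ⋃ₙ ([s₁ⁿ] ∪ ⋯ ∪ [sₙⁿ]). -/
open Set

/-- The basic clopen cylinder determined by the first `l` values of `t`. -/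
def cyl (t : ℕ → Bool) (l : ℕ) : Set (ℕ → Bool) := {x | ∀ i < l, x i = t i}

lemma cyl_clopen (t : ℕ → Bool) (l : ℕ) : IsClopen (cyl t l) := by
  have : cyl t l = ⋂ i ∈ Finset.range l, (fun x : ℕ → Bool => x i) ⁻¹' {t i} := by
    ext x; simp [cyl]
  rw [this]
  exact isClopen_biInter_finset fun i _ => (isClopen_discrete {t i}).preimage (continuous_apply i)

lemma cyl_self (t : ℕ → Bool) (l : ℕ) : t ∈ cyl t l := fun _ _ => rfl

lemma cyl_congr (t t' : ℕ → Bool) (l : ℕ) (h : ∀ i < l, t i = t' i) : cyl t l = cyl t' l := by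
  ext x
  constructor <;> intro hx i hi
  · rw [hx i hi, h i hi]
  · rw [hx i hi, h i hi]

/-- unions of `m` cylinders of length `l` form a finite family -/
lemma level_finite (m l : ℕ) :
    {U : Set (ℕ → Bool) | ∃ s : ℕ → (ℕ → Bool),
      U = ⋃ i, ⋃ (_ : i < m), cyl (s i) l}.Finite := by
  have : {U : Set (ℕ → Bool) | ∃ s : ℕ → (ℕ → Bool),
      U = ⋃ i, ⋃ (_ : i < m), cyl (s i) l} ⊆
      Set.range (fun σ : Fin m → (Fin l → Bool) =>
        ⋃ i, ⋃ (h : i < m), cyl (fun j => if hj : j < l then σ ⟨i, h⟩ ⟨j, hj⟩ else false) l) := by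
    rintro U ⟨s, rfl⟩
    refine ⟨fun i j => s i j, ?_⟩
    refine Set.iUnion_congr fun i => ?_
    refine Set.iUnion_congr fun hi => ?_
    exact cyl_congr _ _ _ (fun j hj => by simp [hj])
  exact (Set.finite_range _).subset this

/-- If X ⊆ {0,1}^ℕ satisfies the property that every clopen ω-cover of X admits
infinite subfamilies whose intersections cover X, then X has strong measure zero:
for every increasing sequence (kₙ) there are, for each n, n basic clopen sets of
measure determined by length kₙ whose union over all n covers X. -/
theorem stmt4 (X : Set (ℕ → Bool))
    (h : ∀ 𝒰 : Set (Set (ℕ → Bool)),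
      (∀ U ∈ 𝒰, IsClopen U) → (∀ U ∈ 𝒰, ¬ X ⊆ U) →
      (∀ F : Set (ℕ → Bool), F ⊆ X → F.Finite → ∃ U ∈ 𝒰, F ⊆ U) →
      ∃ 𝒱 : ℕ → Set (Set (ℕ → Bool)),
        (∀ n, 𝒱 n ⊆ 𝒰 ∧ (𝒱 n).Infinite) ∧ X ⊆ ⋃ n, ⋂₀ 𝒱 n) :
    ∀ k : ℕ → ℕ, StrictMono k →
      ∃ s : ℕ → ℕ → (ℕ → Bool),
        X ⊆ ⋃ n, ⋃ i, ⋃ (_ : i < n), cyl (s n i) (k n) := by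
  intro k _hk
  by_cases hcov : ∃ n, ∃ s : ℕ → (ℕ → Bool), X ⊆ ⋃ i, ⋃ (_ : i < n), cyl (s i) (k n)
  · obtain ⟨n0, s0, hs0⟩ := hcov
    refine ⟨fun _ => s0, fun x hx => ?_⟩
    exact Set.mem_iUnion.2 ⟨n0, hs0 hx⟩
  push_neg at hcov
  -- the ω-cover
  set 𝒰 : Set (Set (ℕ → Bool)) :=
    {U | ∃ m, ∃ s : ℕ → (ℕ → Bool), U = ⋃ i, ⋃ (_ : i < m), cyl (s i) (k m)} with h𝒰
  have hclopen : ∀ U ∈ 𝒰, IsClopen U := by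
    rintro U ⟨m, s, rfl⟩
    have : (⋃ i, ⋃ (_ : i < m), cyl (s i) (k m)) =
        ⋃ i ∈ Finset.range m, cyl (s i) (k m) := by
      simp
    rw [this]
    exact isClopen_biUnion_finset fun i _ => cyl_clopen _ _
  have hns : ∀ U ∈ 𝒰, ¬ X ⊆ U := by
    rintro U ⟨m, s, rfl⟩
    exact hcov m s
  have homega : ∀ F : Set (ℕ → Bool), F ⊆ X → F.Finite → ∃ U ∈ 𝒰, F ⊆ U := by
    intro F hFX hF
    classical
    set L := hF.toFinset.toList with hL
    refine ⟨⋃ i, ⋃ (_ : i < L.length), cyl (L.getD i (fun _ => false)) (k L.length), 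
      ⟨L.length, fun i => L.getD i (fun _ => false), rfl⟩, ?_⟩
    intro x hx
    have : x ∈ L := by
      rw [hL, Finset.mem_toList, Set.Finite.mem_toFinset]
      exact hx
    obtain ⟨i, hi, hxi⟩ := List.mem_iff_getElem.1 this
    refine Set.mem_iUnion.2 ⟨i, Set.mem_iUnion.2 ⟨hi, ?_⟩⟩
    have : L.getD i (fun _ => false) = x := by
      rw [List.getD_eq_getElem _ _ hi, hxi]
    rw [this]
    exact cyl_self _ _
  obtain ⟨𝒱, h𝒱, hXcov⟩ := h 𝒰 hclopen hns homega
  -- choose members at distinct levels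
  have key : ∀ n b, ∃ m, b ≤ m ∧ ∃ s : ℕ → (ℕ → Bool),
      (⋃ i, ⋃ (_ : i < m), cyl (s i) (k m)) ∈ 𝒱 n := by
    intro n b
    by_contra hc
    push_neg at hc
    apply (h𝒱 n).2
    have hsub : 𝒱 n ⊆ ⋃ m ∈ Finset.range b,
        {U : Set (ℕ → Bool) | ∃ s : ℕ → (ℕ → Bool),
          U = ⋃ i, ⋃ (_ : i < m), cyl (s i) (k m)} := by
      intro U hU
      obtain ⟨m, s, rfl⟩ := (h𝒱 n).1 hU
      have hm : m < b := by
        by_contra hm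
        exact hc m (le_of_not_gt hm) s hU
      simp only [Set.mem_iUnion]
      exact ⟨m, Finset.mem_range.2 hm, s, rfl⟩
    exact (Set.Finite.biUnion (Finset.range b).finite_toSet
      (fun m _ => level_finite m (k m))).subset hsub
  classical
  choose M hMb S hS using key
  -- strictly increasing bounds
  let B : ℕ → ℕ := fun n => Nat.rec 0 (fun n b => M n b + 1) n
  have hBsucc : ∀ n, B (n + 1) = M n (B n) + 1 := fun n => rfl
  have hMmono : StrictMono (fun n => M n (B n)) := by
    apply strictMono_nat_of_lt_succ
    intro n
    calc M n (B n) < M n (B n) + 1 := Nat.lt_succ_self _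
    _ = B (n + 1) := (hBsucc n).symm
    _ ≤ M (n + 1) (B (n + 1)) := hMb _ _
  refine ⟨fun p => if hp : ∃ n, M n (B n) = p then S hp.choose (B hp.choose) else fun _ _ => false,
    ?_⟩
  intro x hx
  obtain ⟨n, hn⟩ := Set.mem_iUnion.1 (hXcov hx)
  have hxU : x ∈ ⋃ i, ⋃ (_ : i < M n (B n)), cyl (S n (B n) i) (k (M n (B n))) :=
    hn _ (hS n (B n))
  refine Set.mem_iUnion.2 ⟨M n (B n), ?_⟩
  have hp : ∃ n', M n' (B n') = M n (B n) := ⟨n, rfl⟩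
  have hpc : hp.choose = n := hMmono.injective hp.choose_spec
  simp only [dif_pos hp, hpc]
  exact hxU
end

section
/- Let X be an Ω-Lindelöf topological space. Then X satisfies the property that every clopen ω-cover 𝒰 of X admits infinite subsets 𝒰ₙ ⊆ 𝒰 with {⋂𝒰ₙ : n ∈ ℕ} a cover of X, if and only if: for every continuous map Ψ : X → [ℕ]^∞ whose image ℱ is free and centered, ℱ can be written as a countable union ℱ = ⋃ₙ ℱₙ where each ℱₙ has a pseudo-intersection. -/
open Set

def IsOmegaCover {α : Type*} (𝒰 : Set (Set α)) : Prop :=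
  univ ∉ 𝒰 ∧ ∀ F : Set α, F.Finite → ∃ U ∈ 𝒰, F ⊆ U

/-- X is Ω-Lindelöf: every open ω-cover contains a countable ω-subcover. -/
def OmegaLindelof (α : Type*) [TopologicalSpace α] : Prop :=
  ∀ 𝒰 : Set (Set α), (∀ U ∈ 𝒰, IsOpen U) → IsOmegaCover 𝒰 →
    ∃ 𝒱 ⊆ 𝒰, 𝒱.Countable ∧ IsOmegaCover 𝒱

/-- In an ω-cover, for every finite set T the family of members containing T
is infinite. -/
lemma omegaCover_aux {α : Type*} {𝒰 : Set (Set α)} (h : IsOmegaCover 𝒰)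
    {T : Set α} (hT : T.Finite) : {W | W ∈ 𝒰 ∧ T ⊆ W}.Infinite := by
  by_contra hni
  rw [Set.not_infinite] at hni
  have hG := hni
  -- α is nonempty
  obtain ⟨U₀, hU₀, -⟩ := h.2 ∅ finite_empty
  have hU₀ne : U₀ ≠ univ := fun he => h.1 (he ▸ hU₀)
  obtain ⟨x₀, -⟩ := (Set.ne_univ_iff_exists_notMem U₀).mp hU₀ne
  haveI : Nonempty α := ⟨x₀⟩
  have hch : ∀ W ∈ {W | W ∈ 𝒰 ∧ T ⊆ W}, ∃ x, x ∉ W := by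
    intro W hW
    exact (Set.ne_univ_iff_exists_notMem W).mp (fun he => h.1 (he ▸ hW.1))
  choose! f hf using hch
  obtain ⟨V, hV𝒰, hFV⟩ := h.2 (T ∪ f '' {W | W ∈ 𝒰 ∧ T ⊆ W})
    (hT.union (hG.image f))
  have hTV : T ⊆ V := (Set.union_subset_iff.mp hFV).1
  have hVG : V ∈ {W | W ∈ 𝒰 ∧ T ⊆ W} := ⟨hV𝒰, hTV⟩
  exact hf V hVG (hFV (Or.inr (Set.mem_image_of_mem f hVG)))

/-- For Ω-Lindelöf X: every clopen ω-cover admits infinite subfamilies whose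
intersections form a cover, iff every continuous map Ψ : X → P(ℕ) (identified with
{0,1}^ℕ) with free centered image into the infinite subsets of ℕ has image
decomposable as a countable union of families with pseudo-intersections. -/
theorem stmt5 {α : Type*} [TopologicalSpace α] (hL : OmegaLindelof α) :
    (∀ 𝒰 : Set (Set α), (∀ U ∈ 𝒰, IsClopen U) → IsOmegaCover 𝒰 →
      ∃ 𝒱 : ℕ → Set (Set α), (∀ n, 𝒱 n ⊆ 𝒰 ∧ (𝒱 n).Infinite) ∧
        IsCover (Set.range fun n => ⋂₀ 𝒱 n)) ↔
    (∀ Ψ : α → (ℕ → Bool), Continuous Ψ →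
      -- the image is free: the intersection of the corresponding sets is empty
      (∀ n : ℕ, ∃ x : α, Ψ x n = false) →
      -- the image is centered (hence consists of infinite subsets of ℕ)
      (∀ T : Finset α, {n : ℕ | ∀ x ∈ T, Ψ x n = true}.Infinite) →
      ∃ 𝒢 : ℕ → Set (Set ℕ),
        (⋃ n, 𝒢 n) = {S : Set ℕ | ∃ x : α, S = {n | Ψ x n = true}} ∧
        ∀ n, ∃ A : Set ℕ, A.Infinite ∧ ∀ B ∈ 𝒢 n, (A \ B).Finite) := by
  constructor
  · -- forward direction
    intro hLHS Ψ hΨ hfree hcent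
    set U : ℕ → Set α := fun k => {x | Ψ x k = true} with hUdef
    have hUclopen : ∀ k, IsClopen (U k) := by
      intro k
      have : U k = (fun x => Ψ x k) ⁻¹' {true} := by ext x; simp [hUdef]
      rw [this]
      exact (isClopen_discrete {true}).preimage ((continuous_apply k).comp hΨ)
    have hUne : ∀ k, U k ≠ univ := by
      intro k h
      obtain ⟨x, hx⟩ := hfree k
      have hxU : x ∈ U k := h ▸ mem_univ x
      simp only [hUdef, mem_setOf_eq] at hxU
      rw [hx] at hxU; exact Bool.false_ne_true hxU
    have hcov : IsOmegaCover (range U) := by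
      constructor
      · rintro ⟨k, hk⟩; exact hUne k hk
      · intro F hF
        obtain ⟨n, hn⟩ := (hcent hF.toFinset).nonempty
        exact ⟨U n, mem_range_self n, fun x hx => hn x (hF.mem_toFinset.mpr hx)⟩
    obtain ⟨𝒱, h𝒱, hcover⟩ := hLHS (range U)
      (by rintro W ⟨k, rfl⟩; exact hUclopen k) hcov
    have hunion : (⋃ n, ⋂₀ 𝒱 n) = univ := by
      rw [← hcover.2, Set.sUnion_range]
    refine ⟨fun n => (fun x => {k | Ψ x k = true}) '' (⋂₀ 𝒱 n), ?_, ?_⟩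
    · ext S
      simp only [mem_iUnion, mem_image, mem_setOf_eq]
      constructor
      · rintro ⟨n, x, -, rfl⟩; exact ⟨x, rfl⟩
      · rintro ⟨x, rfl⟩
        have : x ∈ ⋃ n, ⋂₀ 𝒱 n := hunion ▸ mem_univ x
        obtain ⟨n, hn⟩ := mem_iUnion.mp this
        exact ⟨n, x, hn, rfl⟩
    · intro n
      refine ⟨{k | U k ∈ 𝒱 n}, ?_, ?_⟩
      · by_contra hni
        rw [Set.not_infinite] at hni
        have hfin := hni
        have hsub : 𝒱 n ⊆ U '' {k | U k ∈ 𝒱 n} := by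
          intro W hW
          obtain ⟨k, rfl⟩ := (h𝒱 n).1 hW
          exact ⟨k, hW, rfl⟩
        exact (h𝒱 n).2 ((hfin.image U).subset hsub)
      · rintro B ⟨x, hx, rfl⟩
        have : {k | U k ∈ 𝒱 n} \ {k | Ψ x k = true} = ∅ := by
          ext k
          simp only [mem_diff, mem_setOf_eq, mem_empty_iff_false, iff_false, not_and, not_not]
          intro hk
          exact hx (U k) hk
        rw [this]; exact finite_empty
  · -- backward direction
    intro hRHS 𝒰 hclopen hcov
    obtain ⟨𝒱, h𝒱𝒰, hcount, hcov𝒱⟩ := hL 𝒰 (fun W hW => (hclopen W hW).isOpen) hcov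
    have h𝒱inf : 𝒱.Infinite :=
      (omegaCover_aux hcov𝒱 finite_empty).mono (fun W hW => hW.1)
    haveI := hcount.to_subtype
    haveI : Infinite ↥𝒱 := h𝒱inf.to_subtype
    obtain ⟨d⟩ := nonempty_denumerable ↥𝒱
    set e : ↥𝒱 ≃ ℕ := @Denumerable.eqv ↥𝒱 d with hedef
    set V : ℕ → Set α := fun n => ↑(e.symm n) with hVdef
    have hVmem : ∀ n, V n ∈ 𝒱 := fun n => (e.symm n).2
    have hVinj : Function.Injective V :=
      Subtype.val_injective.comp e.symm.injective
    have hVsurj : ∀ W ∈ 𝒱, ∃ n, V n = W := by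
      intro W hW
      exact ⟨e ⟨W, hW⟩, by simp [hVdef]⟩
    have hVne : ∀ n, V n ≠ univ := fun n he => hcov𝒱.1 (he ▸ hVmem n)
    set Ψ : α → ℕ → Bool := fun x n => (V n).boolIndicator x with hΨdef
    have hΨmem : ∀ x n, Ψ x n = true ↔ x ∈ V n := by
      intro x n; exact ((V n).mem_iff_boolIndicator x).symm
    have hΨcont : Continuous Ψ := by
      apply continuous_pi
      intro n
      exact (continuous_boolIndicator_iff_isClopen (V n)).mpr
        (hclopen (V n) (h𝒱𝒰 (hVmem n)))
    have hΨfree : ∀ n : ℕ, ∃ x : α, Ψ x n = false := by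
      intro n
      obtain ⟨x, hx⟩ := (Set.ne_univ_iff_exists_notMem (V n)).mp (hVne n)
      exact ⟨x, ((V n).notMem_iff_boolIndicator x).mp hx⟩
    have hΨcent : ∀ T : Finset α, {n : ℕ | ∀ x ∈ T, Ψ x n = true}.Infinite := by
      intro T
      have hG : {W | W ∈ 𝒱 ∧ ↑T ⊆ W}.Infinite :=
        omegaCover_aux hcov𝒱 T.finite_toSet
      have key : {n : ℕ | (T : Set α) ⊆ V n}.Infinite := by
        by_contra hni
        rw [Set.not_infinite] at hni
        have hfin := hni
        apply hG
        have hsub : {W | W ∈ 𝒱 ∧ ↑T ⊆ W} ⊆ V '' {n : ℕ | (T : Set α) ⊆ V n} := by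
          rintro W ⟨hW𝒱, hTW⟩
          obtain ⟨n, rfl⟩ := hVsurj W hW𝒱
          exact ⟨n, hTW, rfl⟩
        exact (hfin.image V).subset hsub
      apply key.mono
      intro n hn x hx
      exact (hΨmem x n).mpr (hn hx)
    obtain ⟨𝒢, hG1, hG2⟩ := hRHS Ψ hΨcont hΨfree hΨcent
    choose A hAinf hA using hG2
    set q : ℕ ≃ ℕ × ℕ := (Denumerable.eqv (ℕ × ℕ)).symm with hqdef
    set 𝒲 : ℕ × ℕ → Set (Set α) := fun p => V '' {k | k ∈ A p.1 ∧ p.2 ≤ k} with hWdef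
    have hWinf : ∀ p : ℕ × ℕ, ({k | k ∈ A p.1 ∧ p.2 ≤ k}).Infinite := by
      intro p
      have : {k | k ∈ A p.1 ∧ p.2 ≤ k} = A p.1 \ {k | k < p.2} := by
        ext k; simp only [mem_setOf_eq, mem_diff, not_lt]
      rw [this]
      exact (hAinf p.1).diff (Set.finite_Iio p.2)
    refine ⟨fun j => 𝒲 (q j), fun j => ⟨?_, ?_⟩, ?_, ?_⟩
    · rintro W ⟨k, -, rfl⟩
      exact h𝒱𝒰 (hVmem k)
    · exact ((hWinf (q j)).image (hVinj.injOn))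
    · -- univ not in range
      rintro ⟨j, hj⟩
      obtain ⟨k₀, hk₀⟩ := (hWinf (q j)).nonempty
      have hsub : ⋂₀ 𝒲 (q j) ⊆ V k₀ :=
        sInter_subset_of_mem ⟨k₀, hk₀, rfl⟩
      have : V k₀ = univ := univ_subset_iff.mp (hj ▸ hsub)
      exact hVne k₀ this
    · -- covers
      apply Set.eq_univ_of_forall
      intro x
      have hSx : {n | Ψ x n = true} ∈ ⋃ n, 𝒢 n := by
        rw [hG1]; exact ⟨x, rfl⟩
      obtain ⟨n, hn⟩ := mem_iUnion.mp hSx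
      have hfin : (A n \ {m | Ψ x m = true}).Finite := hA n _ hn
      obtain ⟨m, hm⟩ := hfin.bddAbove
      refine ⟨⋂₀ 𝒲 (q (q.symm (n, m + 1))), ⟨q.symm (n, m + 1), rfl⟩, ?_⟩
      rw [q.apply_symm_apply]
      rintro W ⟨k, ⟨hkA, hkm⟩, rfl⟩
      have hkS : k ∈ {m | Ψ x m = true} := by
        by_contra hk
        have : k ≤ m := hm ⟨hkA, hk⟩
        omega
      exact (hΨmem x k).mp hkS
end

section
/- If every finite power X^k of a topological space X satisfies: every open ω-cover 𝒱 of X^k admits infinite subsets 𝒱ₙ ⊆ 𝒱 with {⋂𝒱ₙ : n} a cover of X^k — then X satisfies: every open ω-cover 𝒰 of X admits infinite subsets 𝒰ₙ ⊆ 𝒰 with {⋂𝒰ₙ : n} an ω-cover of X. -/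
open Set

/-- If every finite power X^k satisfies (Ω choose O)_∞, then X satisfies (Ω choose Ω)_∞. -/
theorem stmt6 {α : Type*} [TopologicalSpace α]
    (h : ∀ k : ℕ, ∀ 𝒱 : Set (Set (Fin k → α)),
      (∀ V ∈ 𝒱, IsOpen V) → IsOmegaCover 𝒱 →
      ∃ 𝒲 : ℕ → Set (Set (Fin k → α)), (∀ n, 𝒲 n ⊆ 𝒱 ∧ (𝒲 n).Infinite) ∧
        IsCover (Set.range fun n => ⋂₀ 𝒲 n)) :
    ∀ 𝒰 : Set (Set α), (∀ U ∈ 𝒰, IsOpen U) → IsOmegaCover 𝒰 →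
      ∃ 𝒱 : ℕ → Set (Set α), (∀ n, 𝒱 n ⊆ 𝒰 ∧ (𝒱 n).Infinite) ∧
        IsOmegaCover (Set.range fun n => ⋂₀ 𝒱 n) := by
  intro 𝒰 hopen hω
  obtain ⟨hU_univ, hU_fin⟩ := hω
  by_cases hne : Nonempty α
  swap
  · obtain ⟨U, hU, -⟩ := hU_fin ∅ finite_empty
    have : U = univ := eq_univ_of_forall fun x => (hne ⟨x⟩).elim
    exact absurd (this ▸ hU) hU_univ
  obtain ⟨a₀⟩ := hne
  -- the power map
  set P : ∀ k : ℕ, Set α → Set (Fin (k+1) → α) :=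
    fun k U => univ.pi fun _ => U with hP
  have hPmem : ∀ k U (f : Fin (k+1) → α), f ∈ P k U ↔ ∀ i, f i ∈ U := by
    intro k U f
    simp [hP, Set.mem_pi]
  have hPinj : ∀ k, Function.Injective (P k) := by
    intro k U V hUV
    ext x
    constructor
    · intro hx
      have : (fun _ : Fin (k+1) => x) ∈ P k V := by
        rw [← hUV, hPmem]; exact fun _ => hx
      exact (hPmem k V _).1 this 0
    · intro hx
      have : (fun _ : Fin (k+1) => x) ∈ P k U := by
        rw [hUV, hPmem]; exact fun _ => hx
      exact (hPmem k U _).1 this 0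
  have key : ∀ k : ℕ, ∃ 𝒲 : ℕ → Set (Set (Fin (k+1) → α)),
      (∀ n, 𝒲 n ⊆ P k '' 𝒰 ∧ (𝒲 n).Infinite) ∧
        IsCover (Set.range fun n => ⋂₀ 𝒲 n) := by
    intro k
    apply h (k+1) (P k '' 𝒰)
    · rintro V ⟨U, hU, rfl⟩
      exact isOpen_set_pi finite_univ fun i _ => hopen U hU
    · constructor
      · rintro ⟨U, hU, hUuniv⟩
        have : U = univ := by
          apply eq_univ_of_forall
          intro x
          have : (fun _ : Fin (k+1) => x) ∈ P k U := hUuniv ▸ mem_univ _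
          exact (hPmem k U _).1 this 0
        exact hU_univ (this ▸ hU)
      · intro G hG
        obtain ⟨U, hU, hFU⟩ := hU_fin (⋃ g ∈ G, range g)
          (hG.biUnion fun g _ => finite_range g)
        refine ⟨P k U, ⟨U, hU, rfl⟩, fun g hg => (hPmem k U g).2 fun i => ?_⟩
        exact hFU (mem_biUnion hg (mem_range_self i))
  choose 𝒲 h𝒲1 h𝒲2 using key
  set 𝒱' : ℕ → ℕ → Set (Set α) :=
    fun k m => {U | U ∈ 𝒰 ∧ P k U ∈ 𝒲 k m} with h𝒱'
  refine ⟨fun n => 𝒱' n.unpair.1 n.unpair.2, ?_, ?_, ?_⟩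
  · intro n
    set k := n.unpair.1
    set m := n.unpair.2
    constructor
    · exact fun U hU => hU.1
    · have hsub : 𝒲 k m ⊆ P k '' 𝒱' k m := by
        intro W hW
        obtain ⟨U, hU, rfl⟩ := (h𝒲1 k m).1 hW
        exact ⟨U, ⟨hU, hW⟩, rfl⟩
      exact Set.Infinite.of_image (P k) (((h𝒲1 k m).2).mono hsub)
  · rintro ⟨n, hn⟩
    set k := n.unpair.1
    set m := n.unpair.2
    have hsub : 𝒲 k m ⊆ P k '' 𝒱' k m := by
      intro W hW
      obtain ⟨U, hU, rfl⟩ := (h𝒲1 k m).1 hW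
      exact ⟨U, ⟨hU, hW⟩, rfl⟩
    have hinf := Set.Infinite.of_image (P k) (((h𝒲1 k m).2).mono hsub)
    obtain ⟨U, hU⟩ := hinf.nonempty
    have : univ ⊆ U := hn ▸ sInter_subset_of_mem hU
    exact hU_univ ((univ_subset_iff.1 this) ▸ hU.1)
  · intro F hF
    -- enumerate F
    set l : List α := hF.toFinset.toList with hl
    set k := l.length
    set f : Fin (k+1) → α := fun i => l.getD i a₀ with hf
    have hcov := (h𝒲2 k).2
    have hfmem : f ∈ ⋃₀ Set.range fun m => ⋂₀ 𝒲 k m := hcov ▸ mem_univ f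
    obtain ⟨t, ⟨m, rfl⟩, hft⟩ := hfmem
    refine ⟨⋂₀ 𝒱' k m, ⟨Nat.pair k m, by simp [Nat.unpair_pair]⟩, ?_⟩
    intro x hx
    rintro S ⟨hS𝒰, hSW⟩
    have hfS : f ∈ P k S := hft _ hSW
    have hxl : x ∈ l := by
      rw [hl]
      simp [Set.Finite.mem_toFinset, hx]
    obtain ⟨j, hj⟩ := List.mem_iff_get.1 hxl
    have : f ⟨j, j.isLt.trans (Nat.lt_succ_self k)⟩ = x := by
      rw [hf]
      simp only []
      rw [List.getD_eq_getElem l a₀ j.isLt]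
      simpa using hj
    have := (hPmem k S f).1 hfS ⟨j, j.isLt.trans (Nat.lt_succ_self k)⟩
    rwa [‹f _ = x›] at this
end

section
/- A topological space X satisfies S₁(Γ,Γ) if and only if it satisfies ∩_∞(Γ,Γ): for every sequence (𝒰ₙ) of open γ-covers of X there exist infinite subsets 𝒱ₙ ⊆ 𝒰ₙ such that {⋂𝒱ₙ : n ∈ ℕ} is a γ-cover of X. -/
open Set

section BChain
variable {β : Type*} (P : ℕ → β → Prop)
    (h : ∀ (k : ℕ) (s : Set β), s.Finite → ∃ b, b ∉ s ∧ P k b)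

noncomputable def bChain : ℕ → List β
  | 0 => []
  | k+1 => bChain k ++ [(h k {b | b ∈ bChain k} (List.finite_toSet _)).choose]

noncomputable def bSeq (k : ℕ) : β :=
  (h k {b | b ∈ bChain P h k} (List.finite_toSet _)).choose

lemma bSeq_spec (k : ℕ) : P k (bSeq P h k) :=
  (h k {b | b ∈ bChain P h k} (List.finite_toSet _)).choose_spec.2

lemma bSeq_not_mem (k : ℕ) : bSeq P h k ∉ bChain P h k :=
  (h k {b | b ∈ bChain P h k} (List.finite_toSet _)).choose_spec.1

lemma bSeq_mem_succ (k : ℕ) : bSeq P h k ∈ bChain P h (k+1) := by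
  simp [bChain, bSeq]

lemma bSeq_mem_of_lt {j k : ℕ} (hjk : j < k) : bSeq P h j ∈ bChain P h k := by
  induction k with
  | zero => omega
  | succ k ih =>
    rcases Nat.lt_succ_iff_lt_or_eq.mp hjk with h' | h'
    · show bSeq P h j ∈ bChain P h k ++ _
      exact List.mem_append_left _ (ih h')
    · subst h'; exact bSeq_mem_succ P h j

lemma bSeq_injective : Function.Injective (bSeq P h) := by
  intro j k hEq
  by_contra hne
  rcases Nat.lt_or_ge j k with h' | h'
  · exact bSeq_not_mem P h k (hEq ▸ bSeq_mem_of_lt P h h')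
  · exact bSeq_not_mem P h j (hEq ▸ bSeq_mem_of_lt P h (lt_of_le_of_ne h' (Ne.symm hne)))

end BChain

lemma isGammaCover_range {α : Type*} (V : ℕ → Set α) (hne : ∀ k, V k ≠ univ)
    (hbad : ∀ x, {k | x ∉ V k}.Finite) : IsGammaCover (Set.range V) := by
  have hinf : (Set.range V).Infinite := by
    by_contra hcon
    rw [Set.not_infinite] at hcon
    have hfin := hcon
    have : Finite ↥(Set.range V) := hfin.to_subtype
    obtain ⟨y, hy⟩ := Finite.exists_infinite_fiber
      (fun k => (⟨V k, Set.mem_range_self k⟩ : Set.range V))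
    obtain ⟨k₀, hk₀⟩ := y.2
    obtain ⟨x, hx⟩ := (Set.ne_univ_iff_exists_notMem _).mp (hk₀ ▸ hne k₀)
    have hsub : (fun k => (⟨V k, Set.mem_range_self k⟩ : Set.range V)) ⁻¹' {y}
        ⊆ {k | x ∉ V k} := by
      intro k hk
      have : V k = (y : Set α) := congrArg Subtype.val hk
      simpa [this] using hx
    exact ((hbad x).subset hsub).not_infinite (Set.infinite_coe_iff.mp hy)
  refine ⟨hinf, ?_, ?_⟩
  · rintro ⟨k, hk⟩; exact hne k hk
  · intro x
    refine ((hbad x).image V).subset ?_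
    rintro S ⟨⟨k, rfl⟩, hxS⟩
    exact ⟨k, hxS, rfl⟩

lemma exists_u {α : Type*} (𝒰 : ℕ → Set (Set α))
    (hinf : ∀ n, (𝒰 n).Infinite) (hbad : ∀ n x, {U ∈ 𝒰 n | x ∉ U}.Finite) :
    ∃ u : ℕ → ℕ → Set α, (∀ n j, u n j ∈ 𝒰 n) ∧
      (∀ n j n' j', u n j = u n' j' → n = n' ∧ j = j') ∧
      (∀ n x, {j | x ∉ u n j}.Finite) := by
  have hsel : ∀ (k : ℕ) (s : Set (Set α)), s.Finite →
      ∃ U, U ∉ s ∧ U ∈ 𝒰 (Nat.unpair k).1 := by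
    intro k s hs
    obtain ⟨U, hU1, hU2⟩ := ((hinf (Nat.unpair k).1).diff hs).nonempty
    exact ⟨U, hU2, hU1⟩
  set g := bSeq _ hsel with hg
  have hg_inj := bSeq_injective _ hsel
  have hg_mem : ∀ c, g c ∈ 𝒰 (Nat.unpair c).1 := fun c => bSeq_spec _ hsel c
  refine ⟨fun n j => g (Nat.pair n j), ?_, ?_, ?_⟩
  · intro n j
    simpa [Nat.unpair_pair] using hg_mem (Nat.pair n j)
  · intro n j n' j' hEq
    exact Nat.pair_eq_pair.mp (hg_inj hEq)
  · intro n x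
    have hsub : {j | x ∉ g (Nat.pair n j)} ⊆
        (fun j => g (Nat.pair n j)) ⁻¹' {U | U ∈ 𝒰 n ∧ x ∉ U} := by
      intro j hj
      refine ⟨?_, hj⟩
      simpa [Nat.unpair_pair] using hg_mem (Nat.pair n j)
    refine (Set.Finite.preimage ?_ (hbad n x)).subset hsub
    intro a _ b _ hab
    exact (Nat.pair_eq_pair.mp (hg_inj hab)).2
/-- S₁(Γ,Γ) is equivalent to ∩_∞(Γ,Γ). -/
theorem stmt7 {α : Type*} [TopologicalSpace α] :
    (∀ 𝒰 : ℕ → Set (Set α),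
      (∀ n, (∀ U ∈ 𝒰 n, IsOpen U) ∧ IsGammaCover (𝒰 n)) →
      ∃ U : ℕ → Set α, (∀ n, U n ∈ 𝒰 n) ∧ IsGammaCover (Set.range U)) ↔
    (∀ 𝒰 : ℕ → Set (Set α),
      (∀ n, (∀ U ∈ 𝒰 n, IsOpen U) ∧ IsGammaCover (𝒰 n)) →
      ∃ 𝒱 : ℕ → Set (Set α), (∀ n, 𝒱 n ⊆ 𝒰 n ∧ (𝒱 n).Infinite) ∧
        IsGammaCover (Set.range fun n => ⋂₀ 𝒱 n)) := by
  constructor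
  · -- S₁ → ∩_∞
    intro hS 𝒰 h𝒰
    obtain ⟨u, hu_mem, hu_inj, hu_gam⟩ :=
      exists_u 𝒰 (fun n => (h𝒰 n).2.1) (fun n => (h𝒰 n).2.2.2)
    have hu_ne : ∀ n j, u n j ≠ univ := fun n j h => (h𝒰 n).2.2.1 (h ▸ hu_mem n j)
    have h𝒲 : ∀ k, (∀ U ∈ Set.range (fun j => u (Nat.unpair k).1 (k + j)), IsOpen U) ∧
        IsGammaCover (Set.range (fun j => u (Nat.unpair k).1 (k + j))) := by
      intro k
      constructor
      · rintro U ⟨j, rfl⟩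
        exact (h𝒰 (Nat.unpair k).1).1 _ (hu_mem _ _)
      · refine isGammaCover_range _ (fun j => hu_ne (Nat.unpair k).1 (k + j)) ?_
        intro x
        have hsub : {j | x ∉ u (Nat.unpair k).1 (k + j)} ⊆
            (fun j => k + j) ⁻¹' {j | x ∉ u (Nat.unpair k).1 j} := fun j hj => hj
        refine (Set.Finite.preimage ?_ (hu_gam (Nat.unpair k).1 x)).subset hsub
        intro a _ b _ hab
        simp only at hab
        omega
    obtain ⟨V, hVmem, hVgam⟩ := hS _ h𝒲
    have hVj : ∀ k, ∃ j, k ≤ j ∧ V k = u (Nat.unpair k).1 j := by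
      intro k
      obtain ⟨j, hj⟩ := hVmem k
      exact ⟨k + j, Nat.le_add_right k j, hj.symm⟩
    choose jf hjle hVu using hVj
    have hVp : ∀ n i, V (Nat.pair n i) = u n (jf (Nat.pair n i)) := by
      intro n i
      have := hVu (Nat.pair n i)
      rwa [Nat.unpair_pair] at this
    refine ⟨fun n => Set.range (fun i => V (Nat.pair n i)), ?_, ?_⟩
    · intro n
      constructor
      · rintro S ⟨i, rfl⟩
        show V (Nat.pair n i) ∈ 𝒰 n
        rw [hVp]
        exact hu_mem n _
      · refine (isGammaCover_range (fun i => V (Nat.pair n i)) ?_ ?_).1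
        · intro i h
          exact hu_ne n _ (by rw [← hVp n i]; exact h)
        · intro x
          obtain ⟨N, hN⟩ := (hu_gam n x).bddAbove
          refine (Set.finite_Iic N).subset ?_
          intro i hi
          have h1 : x ∉ u n (jf (Nat.pair n i)) := by rw [← hVp n i]; exact hi
          have h2 : jf (Nat.pair n i) ≤ N := hN h1
          have h3 : i ≤ jf (Nat.pair n i) := le_trans (Nat.right_le_pair n i) (hjle _)
          exact Set.mem_Iic.mpr (le_trans h3 h2)
    · refine isGammaCover_range _ ?_ ?_
      · intro n h
        have h0 : V (Nat.pair n 0) = univ := by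
          have hsub : (univ : Set α) ⊆ V (Nat.pair n 0) := by
            rw [← h]; exact Set.sInter_subset_of_mem ⟨0, rfl⟩
          exact univ_subset_iff.mp hsub
        exact hu_ne n _ (by rw [← hVp n 0]; exact h0)
      · intro x
        classical
        have hwit : ∀ n, n ∈ {n | x ∉ ⋂₀ Set.range (fun i => V (Nat.pair n i))} →
            ∃ i, x ∉ V (Nat.pair n i) := by
          intro n hn
          simp only [Set.mem_setOf_eq, Set.mem_sInter] at hn
          push_neg at hn
          obtain ⟨S, ⟨i, rfl⟩, hS⟩ := hn
          exact ⟨i, hS⟩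
        choose! wit hwit' using hwit
        have hφ : Set.InjOn (fun n => V (Nat.pair n (wit n)))
            {n | x ∉ ⋂₀ Set.range (fun i => V (Nat.pair n i))} := by
          intro a _ b _ hab
          simp only at hab
          rw [hVp, hVp] at hab
          exact (hu_inj _ _ _ _ hab).1
        have himg : (fun n => V (Nat.pair n (wit n))) ''
            {n | x ∉ ⋂₀ Set.range (fun i => V (Nat.pair n i))} ⊆
            {S ∈ Set.range V | x ∉ S} := by
          rintro S ⟨n, hn, rfl⟩
          exact ⟨⟨_, rfl⟩, hwit' n hn⟩
        exact Set.Finite.of_finite_image ((hVgam.2.2 x).subset himg) hφ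
  · -- ∩_∞ → S₁
    intro hI 𝒰 h𝒰
    obtain ⟨u, hu_mem, hu_inj, hu_gam⟩ :=
      exists_u 𝒰 (fun n => (h𝒰 n).2.1) (fun n => (h𝒰 n).2.2.2)
    have hu_ne : ∀ n j, u n j ≠ univ := fun n j h => (h𝒰 n).2.2.1 (h ▸ hu_mem n j)
    set d : ℕ → ℕ → Set α := fun k j => ⋂ n ∈ Finset.range (k+1), u n j with hd
    have hd_ne : ∀ k j, d k j ≠ univ := by
      intro k j hEq
      have h0 : d k j ⊆ u 0 j :=
        Set.biInter_subset_of_mem (Finset.mem_range.mpr k.succ_pos)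
      exact hu_ne 0 j (univ_subset_iff.mp (hEq ▸ h0))
    have hd_bad : ∀ k x, {j | x ∉ d k j}.Finite := by
      intro k x
      have hsub : {j | x ∉ d k j} ⊆ ⋃ n ∈ Finset.range (k+1), {j | x ∉ u n j} := by
        intro j hj
        simp only [hd, Set.mem_setOf_eq, Set.mem_iInter] at hj
        push_neg at hj
        obtain ⟨n, hn1, hn2⟩ := hj
        exact Set.mem_biUnion hn1 hn2
      exact (Set.Finite.biUnion (Finset.range (k+1)).finite_toSet
        fun n _ => hu_gam n x).subset hsub
    have h𝒟 : ∀ k, (∀ U ∈ Set.range (d k), IsOpen U) ∧ IsGammaCover (Set.range (d k)) := by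
      intro k
      refine ⟨?_, isGammaCover_range _ (hd_ne k) (hd_bad k)⟩
      rintro U ⟨j, rfl⟩
      exact isOpen_biInter_finset fun n _ => (h𝒰 n).1 _ (hu_mem n j)
    obtain ⟨ℰ, hℰ, hWgam⟩ := hI _ h𝒟
    have hWinf : (Set.range fun k => ⋂₀ ℰ k).Infinite := hWgam.1
    have hselW : ∀ (k : ℕ) (s : Set (Set α)), s.Finite →
        ∃ S, S ∉ s ∧ ∃ i, k ≤ i ∧ ⋂₀ ℰ i = S := by
      intro k s hs
      obtain ⟨S, hS1, hS2⟩ :=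
        (hWinf.diff (hs.union ((Set.finite_Iio k).image fun i => ⋂₀ ℰ i))).nonempty
      rw [Set.mem_union] at hS2
      push_neg at hS2
      obtain ⟨i, hi⟩ := hS1
      refine ⟨S, hS2.1, i, ?_, hi⟩
      by_contra hik
      exact hS2.2 ⟨i, Set.mem_Iio.mpr (lt_of_not_ge hik), hi⟩
    have hgW_inj := bSeq_injective _ hselW
    have hgW_spec : ∀ k, ∃ i, k ≤ i ∧ ⋂₀ ℰ i = bSeq _ hselW k :=
      fun k => bSeq_spec _ hselW k
    choose m hm hWm using hgW_spec
    have hpick : ∀ k, ∃ j, d (m k) j ∈ ℰ (m k) := by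
      intro k
      obtain ⟨S, hS⟩ := (hℰ (m k)).2.nonempty
      obtain ⟨j, hj⟩ := (hℰ (m k)).1 hS
      exact ⟨j, hj ▸ hS⟩
    choose jf hjf using hpick
    refine ⟨fun k => u k (jf k), fun k => hu_mem k (jf k), ?_⟩
    refine isGammaCover_range _ (fun k => hu_ne k (jf k)) ?_
    intro x
    have key : ∀ k, x ∉ u k (jf k) → x ∉ bSeq _ hselW k := by
      intro k hx hxg
      apply hx
      have h1 : ⋂₀ ℰ (m k) ⊆ d (m k) (jf k) := Set.sInter_subset_of_mem (hjf k)
      have h2 : d (m k) (jf k) ⊆ u k (jf k) :=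
        Set.biInter_subset_of_mem (Finset.mem_range.mpr (Nat.lt_succ_of_le (hm k)))
      exact h2 (h1 (by rw [hWm k]; exact hxg))
    have hsub : {k | x ∉ u k (jf k)} ⊆
        (bSeq _ hselW) ⁻¹' {S | S ∈ (Set.range fun k => ⋂₀ ℰ k) ∧ x ∉ S} := by
      intro k hk
      exact ⟨⟨m k, hWm k⟩, key k hk⟩
    exact (Set.Finite.preimage (fun a _ b _ hab => hgW_inj hab) (hWgam.2.2 x)).subset hsub
end

section
/- A topological space X satisfies S₁(Ω,Γ) (equivalently, the Gerlits–Nagy γ-property) if and only if it satisfies ∩_∞(Ω,Γ): for every sequence (𝒰ₙ) of open ω-covers of X there exist infinite subsets 𝒱ₙ ⊆ 𝒰ₙ such that {⋂𝒱ₙ : n ∈ ℕ} is a γ-cover of X. -/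
open Set

lemma inj_unbounded {k : ℕ → ℕ} (hk : Function.Injective k) (N : ℕ) :
    ∃ m, N ≤ k m := by
  by_contra h
  push_neg at h
  have hsub : (Set.univ : Set ℕ) ⊆ k ⁻¹' (Set.Iio N) := fun m _ => h m
  exact Set.infinite_univ (((Set.finite_Iio N).preimage hk.injOn).subset hsub)

lemma nat_infinite_of_unbounded {s : Set ℕ} (h : ∀ N, ∃ i ∈ s, N ≤ i) : s.Infinite := by
  intro hfin
  obtain ⟨i, his, hi⟩ := h ((hfin.toFinset.sup id) + 1)
  have h2 := Finset.le_sup (f := id) (hfin.mem_toFinset.mpr his)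
  simp only [id] at h2
  omega

lemma gammaOfIdx {α : Type*} (C : ℕ → Set α) (hne : ∀ n, C n ≠ univ)
    (hγ : ∀ x, {n | x ∉ C n}.Finite) : IsGammaCover (Set.range C) := by
  refine ⟨?_, ?_, ?_⟩
  · intro hfin
    have hcov : (Set.univ : Set ℕ) ⊆ ⋃ V ∈ Set.range C, {n | C n = V} := by
      intro n _
      simp only [mem_iUnion]
      exact ⟨C n, ⟨n, rfl⟩, rfl⟩
    by_cases hall : ∀ V ∈ Set.range C, {n | C n = V}.Finite
    · exact Set.infinite_univ ((hfin.biUnion hall).subset hcov)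
    · push_neg at hall
      obtain ⟨V, hV, hVinf⟩ := hall
      obtain ⟨n0, hn0⟩ := hV
      have hVne : V ≠ univ := hn0 ▸ hne n0
      obtain ⟨x, hx⟩ := (Set.ne_univ_iff_exists_notMem V).mp hVne
      refine hVinf ((hγ x).subset ?_)
      intro n hn
      simp only [mem_setOf_eq] at hn ⊢
      rw [hn]; exact hx
  · rintro ⟨n, hn⟩; exact hne n hn
  · intro x
    refine ((hγ x).image C).subset ?_
    rintro V ⟨⟨n, rfl⟩, hxV⟩
    exact ⟨n, hxV, rfl⟩

lemma gammaExtract {α : Type*} {W : ℕ → Set α} (h : IsGammaCover (Set.range W)) :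
    ∃ k : ℕ → ℕ, Function.Injective k ∧ Function.Injective (fun m => W (k m)) ∧
      (∀ x, {m | x ∉ W (k m)}.Finite) := by
  obtain ⟨hinf, -, hγ⟩ := h
  let e := Set.Infinite.natEmbedding _ hinf
  have he : ∀ m, ∃ i, W i = (e m : Set α) := fun m => (e m).2
  choose k hk using he
  have hWk : Function.Injective (fun m => W (k m)) := by
    intro a b hab
    simp only [hk] at hab
    exact e.injective (Subtype.ext hab)
  refine ⟨k, fun a b hab => hWk (by simp [hab]), hWk, ?_⟩
  intro x
  have hinjval : Function.Injective (fun m => (e m : Set α)) :=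
    Subtype.val_injective.comp e.injective
  have hfin := hγ x
  refine ((hfin.preimage hinjval.injOn).subset ?_ : _)
  intro m hm
  simp only [mem_setOf_eq] at hm
  simp only [mem_preimage, mem_setOf_eq]
  exact ⟨(e m).2, by rwa [← hk m]⟩

/-- S₁(Ω,Γ) is equivalent to ∩_∞(Ω,Γ). -/
theorem stmt8 {α : Type*} [TopologicalSpace α] :
    (∀ 𝒰 : ℕ → Set (Set α),
      (∀ n, (∀ U ∈ 𝒰 n, IsOpen U) ∧ IsOmegaCover (𝒰 n)) →
      ∃ U : ℕ → Set α, (∀ n, U n ∈ 𝒰 n) ∧ IsGammaCover (Set.range U)) ↔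
    (∀ 𝒰 : ℕ → Set (Set α),
      (∀ n, (∀ U ∈ 𝒰 n, IsOpen U) ∧ IsOmegaCover (𝒰 n)) →
      ∃ 𝒱 : ℕ → Set (Set α), (∀ n, 𝒱 n ⊆ 𝒰 n ∧ (𝒱 n).Infinite) ∧
        IsGammaCover (Set.range fun n => ⋂₀ 𝒱 n)) := by
  constructor
  · -- S₁(Ω,Γ) → ∩_∞(Ω,Γ)
    intro hS1 𝒰 h𝒰
    -- Step 1: injective index-wise γ-sequences inside each 𝒰 n
    have hGex : ∀ n, ∃ G : ℕ → Set α, Function.Injective G ∧ (∀ i, G i ∈ 𝒰 n) ∧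
        ∀ x, {i | x ∉ G i}.Finite := by
      intro n
      obtain ⟨U, hUmem, hUγ⟩ := hS1 (fun _ => 𝒰 n) (fun _ => h𝒰 n)
      obtain ⟨k, -, hWk, hkγ⟩ := gammaExtract hUγ
      exact ⟨fun m => U (k m), hWk, fun i => hUmem (k i), hkγ⟩
    choose G hGinj hGmem hGγ using hGex
    -- Step 2: the auxiliary ω-covers
    set 𝒲 : ℕ → Set (Set α) := fun k =>
      {V | ∃ j : ℕ → ℕ, (∀ n ≤ k, k ≤ j n) ∧
        V = ⋂ n ∈ Finset.range (k+1), G n (j n)} with h𝒲def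
    have h𝒲ok : ∀ k, (∀ U ∈ 𝒲 k, IsOpen U) ∧ IsOmegaCover (𝒲 k) := by
      intro k
      refine ⟨?_, ?_, ?_⟩
      · rintro U ⟨j, -, rfl⟩
        exact isOpen_biInter_finset (fun n _ => (h𝒰 n).1 _ (hGmem n (j n)))
      · rintro ⟨j, -, hV⟩
        have hsub : (⋂ n ∈ Finset.range (k+1), G n (j n)) ⊆ G 0 (j 0) :=
          Set.biInter_subset_of_mem (Finset.mem_range.mpr (Nat.succ_pos k))
        rw [← hV] at hsub
        exact (h𝒰 0).2.1 ((univ_subset_iff.mp hsub) ▸ hGmem 0 (j 0))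
      · intro F hF
        have hpick : ∀ n, ∃ i, k ≤ i ∧ ∀ x ∈ F, x ∈ G n i := by
          intro n
          have hbad : ({i | i < k} ∪ ⋃ x ∈ F, {i | x ∉ G n i}).Finite :=
            (Set.finite_Iio k).union (hF.biUnion (fun x _ => hGγ n x))
          obtain ⟨i, hi⟩ := hbad.infinite_compl.nonempty
          simp only [compl_union, mem_inter_iff, mem_compl_iff, mem_setOf_eq,
            mem_iUnion, not_exists, not_lt, not_not] at hi
          exact ⟨i, hi.1, fun x hx => hi.2 x hx⟩
        choose j hj using hpick
        refine ⟨⋂ n ∈ Finset.range (k+1), G n (j n), ⟨j, fun n _ => (hj n).1, rfl⟩, ?_⟩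
        intro x hx
        exact Set.mem_biInter (fun n _ => (hj n).2 x hx)
    -- Step 3: apply S₁ and extract
    obtain ⟨W, hWmem, hWγ⟩ := hS1 𝒲 h𝒲ok
    simp only [h𝒲def, mem_setOf_eq] at hWmem
    choose j hjge hjeq using hWmem
    obtain ⟨km, hkminj, -, hγm⟩ := gammaExtract hWγ
    set I : ℕ → Set ℕ := fun n => {i | ∃ m, n ≤ km m ∧ i = j (km m) n} with hIdef
    have hWsub : ∀ m n, n ≤ km m → W (km m) ⊆ G n (j (km m) n) := by
      intro m n hm
      rw [hjeq (km m)]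
      exact Set.biInter_subset_of_mem (Finset.mem_range.mpr (Nat.lt_succ_of_le hm))
    refine ⟨fun n => G n '' I n, fun n => ⟨?_, ?_⟩, ?_⟩
    · rintro V ⟨i, -, rfl⟩
      exact hGmem n i
    · refine (nat_infinite_of_unbounded ?_).image (hGinj n).injOn
      intro N
      obtain ⟨m, hm⟩ := inj_unbounded hkminj (max n N)
      refine ⟨j (km m) n, ⟨m, le_trans (le_max_left n N) hm, rfl⟩, ?_⟩
      exact le_trans (le_trans (le_max_right n N) hm) (hjge (km m) n (le_trans (le_max_left n N) hm))
    · refine gammaOfIdx (fun n => ⋂₀ (G n '' I n)) ?_ ?_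
      · intro n hC
        obtain ⟨m, hm⟩ := inj_unbounded hkminj n
        have hmem : G n (j (km m) n) ∈ G n '' I n := ⟨j (km m) n, ⟨m, hm, rfl⟩, rfl⟩
        have : G n (j (km m) n) = univ :=
          univ_subset_iff.mp (hC ▸ Set.sInter_subset_of_mem hmem)
        exact (h𝒰 n).2.1 (this ▸ hGmem n (j (km m) n))
      · intro x
        have hS := hγm x
        refine (hS.biUnion (fun m _ => Set.finite_Iic (km m))).subset ?_
        intro n hn
        simp only [mem_setOf_eq, Set.mem_sInter, not_forall] at hn
        obtain ⟨V, hV, hxV⟩ := hn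
        obtain ⟨i, ⟨m, hm, rfl⟩, rfl⟩ := hV
        have hxW : x ∉ W (km m) := fun hw => hxV (hWsub m n hm hw)
        exact Set.mem_biUnion hxW (Set.mem_Iic.mpr hm)
  · -- ∩_∞(Ω,Γ) → S₁(Ω,Γ)
    intro hcap 𝒰 h𝒰
    set 𝒲 : ℕ → Set (Set α) := fun k =>
      {V | ∃ U : ℕ → Set α, (∀ n ≤ k, U n ∈ 𝒰 n) ∧
        V = ⋂ n ∈ Finset.range (k+1), U n} with h𝒲def
    have h𝒲ok : ∀ k, (∀ U ∈ 𝒲 k, IsOpen U) ∧ IsOmegaCover (𝒲 k) := by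
      intro k
      refine ⟨?_, ?_, ?_⟩
      · rintro V ⟨U, hU, rfl⟩
        exact isOpen_biInter_finset (fun n hn =>
          (h𝒰 n).1 _ (hU n (Nat.lt_succ_iff.mp (Finset.mem_range.mp hn))))
      · rintro ⟨U, hU, hV⟩
        have hsub : (⋂ n ∈ Finset.range (k+1), U n) ⊆ U 0 :=
          Set.biInter_subset_of_mem (Finset.mem_range.mpr (Nat.succ_pos k))
        rw [← hV] at hsub
        exact (h𝒰 0).2.1 ((univ_subset_iff.mp hsub) ▸ hU 0 (Nat.zero_le k))
      · intro F hF
        have hpick : ∀ n, ∃ U, U ∈ 𝒰 n ∧ F ⊆ U := by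
          intro n
          obtain ⟨U, hU1, hU2⟩ := (h𝒰 n).2.2 F hF
          exact ⟨U, hU1, hU2⟩
        choose U hUmem hUsub using hpick
        refine ⟨⋂ n ∈ Finset.range (k+1), U n, ⟨U, fun n _ => hUmem n, rfl⟩, ?_⟩
        intro x hx
        exact Set.mem_biInter (fun n _ => hUsub n hx)
    obtain ⟨𝒱, h𝒱, hγ⟩ := hcap 𝒲 h𝒲ok
    obtain ⟨km, hkminj, -, hγm⟩ := gammaExtract hγ
    have hex : ∀ n, ∃ m, n ≤ km m := fun n => inj_unbounded hkminj n
    choose mfun hmfun using hex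
    have hpick : ∀ n, ∃ Un, Un ∈ 𝒰 n ∧ ⋂₀ 𝒱 (km (mfun n)) ⊆ Un := by
      intro n
      obtain ⟨V, hV⟩ := ((h𝒱 (km (mfun n))).2).nonempty
      have hVW : V ∈ 𝒲 (km (mfun n)) := (h𝒱 _).1 hV
      obtain ⟨U, hUmem, rfl⟩ := hVW
      refine ⟨U n, hUmem n (hmfun n), (Set.sInter_subset_of_mem hV).trans ?_⟩
      exact Set.biInter_subset_of_mem (Finset.mem_range.mpr (Nat.lt_succ_of_le (hmfun n)))
    choose Ustar hUmem hUsub using hpick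
    refine ⟨Ustar, hUmem, gammaOfIdx Ustar ?_ ?_⟩
    · intro n h
      exact (h𝒰 n).2.1 (h ▸ hUmem n)
    · intro x
      refine ((hγm x).biUnion (fun m _ => Set.finite_Iic (km m))).subset ?_
      intro n hn
      simp only [mem_setOf_eq] at hn
      have hx : x ∉ ⋂₀ 𝒱 (km (mfun n)) := fun hw => hn (hUsub n hw)
      exact Set.mem_biUnion hx (Set.mem_Iic.mpr (hmfun n))
end

section
/- Let X be a set of reals (or zero-dimensional separable metrizable space) satisfying S₁(BΓ, B_O), equivalently, every Borel image of X in ℕ^ℕ is not dominating. Then X satisfies ∩_∞(BΓ, O): for every sequence (𝒰ₙ) of countable Borel γ-covers of X there are infinite subsets 𝒱ₙ ⊆ 𝒰ₙ with {⋂𝒱ₙ : n ∈ ℕ} a cover of X. -/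
open Set Filter

/-- `U` (bijectively enumerated) is a countable Borel γ-cover of `X`:
Borel members, none containing `X` as its trace (X ∉ 𝒰), and each point of `X`
lies in all but finitely many members. -/
def BorelGammaCoverOf (X : Set ℝ) (U : ℕ → Set ℝ) : Prop :=
  Function.Injective U ∧ (∀ m, MeasurableSet (U m)) ∧
  (∀ m, ¬ X ⊆ U m) ∧ ∀ x ∈ X, {m : ℕ | x ∉ U m}.Finite

/-- The 'eventual membership modulus' map associated to a sequence of enumerated covers. -/
noncomputable def modulus (U : ℕ → ℕ → Set ℝ) (x : ℝ) : ℕ → ℕ :=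
  fun n => sInf {m : ℕ | ∀ k ≥ m, x ∈ U n k}

/-- `Y ⊆ ℕ^ℕ` is dominating. -/
def Dominating (Y : Set (ℕ → ℕ)) : Prop :=
  ∀ g : ℕ → ℕ, ∃ f ∈ Y, ∀ᶠ n in atTop, g n ≤ f n

/-- If for every sequence of countable Borel γ-covers of `X` the image of `X` under the
associated modulus map is not dominating, then `X` satisfies ∩_∞(BΓ,O): for every
sequence of countable Borel γ-covers there are infinite subfamilies 𝒱ₙ ⊆ 𝒰ₙ with
{⋂𝒱ₙ : n ∈ ℕ} a cover of X. -/
theorem stmt9 (X : Set ℝ)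
    (h : ∀ U : ℕ → ℕ → Set ℝ, (∀ n, BorelGammaCoverOf X (U n)) →
      ¬ Dominating ((fun x => modulus U x) '' X)) :
    ∀ U : ℕ → ℕ → Set ℝ, (∀ n, BorelGammaCoverOf X (U n)) →
      ∃ 𝒱 : ℕ → Set (Set ℝ),
        (∀ n, 𝒱 n ⊆ Set.range (U n) ∧ (𝒱 n).Infinite ∧ ¬ X ⊆ ⋂₀ 𝒱 n) ∧
        X ⊆ ⋃ n, ⋂₀ 𝒱 n := by
  intro U hU
  have hnd := h U hU
  rw [Dominating] at hnd
  push_neg at hnd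
  obtain ⟨g, hg⟩ := hnd
  refine ⟨fun n => U n '' Set.Ici (g n), fun n => ?_, fun x hx => ?_⟩
  · refine ⟨Set.image_subset_range _ _,
      (Set.Ici_infinite _).image ((hU n).1.injOn), fun hsub => (hU n).2.2.1 (g n) ?_⟩
    exact hsub.trans (Set.sInter_subset_of_mem ⟨g n, Set.self_mem_Ici, rfl⟩)
  · -- the set S is nonempty
    have hS : ∀ n, ({m : ℕ | ∀ k ≥ m, x ∈ U n k}).Nonempty := by
      intro n
      obtain ⟨M, hM⟩ := ((hU n).2.2.2 x hx).bddAbove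
      refine ⟨M + 1, fun k hk => ?_⟩
      by_contra hxk
      exact absurd (hM hxk) (by omega)
    have hf := hg (modulus U x) ⟨x, hx, rfl⟩
    obtain ⟨n, hn⟩ := (Filter.not_eventually.mp hf).exists
    push_neg at hn
    have hn : modulus U x n < g n := hn
    refine Set.mem_iUnion.mpr ⟨n, fun s hs => ?_⟩
    obtain ⟨k, hk, rfl⟩ := hs
    have := Nat.sInf_mem (hS n)
    exact this k (le_of_lt (lt_of_lt_of_le hn hk))
end

section
/- Let X be a space and (𝒰ₙ) a sequence of countable Borel γ-covers with bijective enumerations 𝒰ₙ = {Uⁿₘ : m ∈ ℕ}. Define Ψ : X → ℕ^ℕ by Ψ(x)(n) = min{m : x ∈ Uⁿₖ for all k ≥ m}. If Ψ[X] is not finitely dominating, then there are infinite subsets 𝒱ₙ ⊆ 𝒰ₙ with {⋂𝒱ₙ : n ∈ ℕ} an ω-cover of X. -/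
open Set Filter

/-- `Y ⊆ ℕ^ℕ` is finitely dominating: maxima of finite subfamilies dominate. -/
def FinitelyDominating (Y : Set (ℕ → ℕ)) : Prop :=
  ∀ g : ℕ → ℕ, ∃ T : Finset (ℕ → ℕ), ↑T ⊆ Y ∧ T.Nonempty ∧
    ∀ᶠ n in atTop, g n ≤ T.sup (fun f => f n)

/-! A function `g` witnessing that `Ψ[X]` is not finitely dominating does the job: take
`𝒱ₙ = {Uⁿₘ : m ≥ g n}`. For finite `F ⊆ X` some `n` has `Ψ(x)(n) ≤ g n` for all `x ∈ F`,
i.e. every `x ∈ F` lies in every `Uⁿₘ` with `m ≥ g n`; the γ-cover property makes the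
infimum defining `Ψ(x)(n)` attained. -/

lemma forall_ge_of_sInf_le {p : ℕ → Prop} (hp : {m | ¬ p m}.Finite) {N : ℕ}
    (hN : sInf {m | ∀ k ≥ m, p k} ≤ N) : ∀ k ≥ N, p k := by
  have hcofinite : ∀ᶠ k in atTop, p k := Nat.cofinite_eq_atTop ▸ hp
  have hmem := Nat.sInf_mem (eventually_atTop.1 hcofinite)
  exact fun k hk => hmem k (hN.trans hk)

lemma exists_forall_finset_exists_le_of_not_finitelyDominating {Y : Set (ℕ → ℕ)}
    (h : ¬ FinitelyDominating Y) :
    ∃ g : ℕ → ℕ, ∀ T : Finset (ℕ → ℕ), ↑T ⊆ Y → ∃ n, ∀ f ∈ T, f n ≤ g n := by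
  simp only [FinitelyDominating, not_forall, not_exists, not_and, not_eventually, not_le] at h
  obtain ⟨g, hg⟩ := h
  refine ⟨g, fun T hT => ?_⟩
  rcases T.eq_empty_or_nonempty with rfl | hTne
  · exact ⟨0, by simp⟩
  obtain ⟨n, hn⟩ := (hg T hT hTne).exists
  exact ⟨n, fun f hf => ((Finset.le_sup (f := fun f => f n) hf).trans_lt hn).le⟩

theorem stmt10_general {α : Type*} (U : ℕ → ℕ → Set α)
    (hinj : ∀ n, Function.Injective (U n))
    (hne : ∀ n m, U n m ≠ univ)
    (hγ : ∀ n, ∀ x : α, {m : ℕ | x ∉ U n m}.Finite)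
    (Ψ : α → ℕ → ℕ)
    (hΨ : ∀ x n, Ψ x n = sInf {m : ℕ | ∀ k ≥ m, x ∈ U n k})
    (hnd : ¬ FinitelyDominating (Set.range Ψ)) :
    ∃ 𝒱 : ℕ → Set (Set α), (∀ n, 𝒱 n ⊆ Set.range (U n) ∧ (𝒱 n).Infinite) ∧
      IsOmegaCover (Set.range fun n => ⋂₀ 𝒱 n) := by
  classical
  obtain ⟨g, hg⟩ := exists_forall_finset_exists_le_of_not_finitelyDominating hnd
  refine ⟨fun n => U n '' Ici (g n),
    fun n => ⟨image_subset_range _ _, (Ici_infinite _).image (hinj n).injOn⟩, ?_, ?_⟩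
  · rintro ⟨n, hn⟩
    have hsub : ⋂₀ (U n '' Ici (g n)) ⊆ U n (g n) :=
      sInter_subset_of_mem (mem_image_of_mem _ self_mem_Ici)
    exact hne n (g n) (eq_univ_of_univ_subset (hn ▸ hsub))
  · intro F hF
    obtain ⟨n, hn⟩ := hg (hF.toFinset.image Ψ) (by simp [Finset.coe_image])
    refine ⟨_, ⟨n, rfl⟩, fun x hx => ?_⟩
    have hΨx : Ψ x n ≤ g n := hn _ (Finset.mem_image_of_mem _ (hF.mem_toFinset.2 hx))
    rw [hΨ] at hΨx
    simp only [sInter_image, mem_iInter₂]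
    exact forall_ge_of_sInf_le (hγ n x) hΨx

/-- Given a sequence of bijectively enumerated countable Borel γ-covers `𝒰ₙ = {Uⁿₘ : m}`
of the space, if the image of the modulus map Ψ(x)(n) = min{m : ∀ k ≥ m, x ∈ Uⁿₖ} is not
finitely dominating, then there are infinite 𝒱ₙ ⊆ 𝒰ₙ with {⋂𝒱ₙ : n} an ω-cover. -/
theorem stmt10 {α : Type*} [MeasurableSpace α] (U : ℕ → ℕ → Set α)
    (hinj : ∀ n, Function.Injective (U n))
    (hborel : ∀ n m, MeasurableSet (U n m))
    (hne : ∀ n m, U n m ≠ univ)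
    (hγ : ∀ n, ∀ x : α, {m : ℕ | x ∉ U n m}.Finite)
    (Ψ : α → ℕ → ℕ)
    (hΨ : ∀ x n, Ψ x n = sInf {m : ℕ | ∀ k ≥ m, x ∈ U n k})
    (hnd : ¬ FinitelyDominating (Set.range Ψ)) :
    ∃ 𝒱 : ℕ → Set (Set α), (∀ n, 𝒱 n ⊆ Set.range (U n) ∧ (𝒱 n).Infinite) ∧
      IsOmegaCover (Set.range fun n => ⋂₀ 𝒱 n) :=
  stmt10_general U hinj hne hγ Ψ hΨ hnd
end

section
/- (Sakai) If a topological space X satisfies S_fin(Ω,Ω) and additionally every open ω-cover 𝒰 of X admits infinite subsets 𝒰ₙ ⊆ 𝒰 with {⋂𝒰ₙ : n ∈ ℕ} an ω-cover of X, then X satisfies S₁(Ω,Ω). -/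
open Set

/-- (Sakai) S_fin(Ω,Ω) together with (Ω choose Ω)_∞ implies S₁(Ω,Ω). -/
theorem stmt11 {α : Type*} [TopologicalSpace α]
    (hsfin : ∀ 𝒰 : ℕ → Set (Set α),
      (∀ n, (∀ U ∈ 𝒰 n, IsOpen U) ∧ IsOmegaCover (𝒰 n)) →
      ∃ ℱ : ℕ → Set (Set α), (∀ n, ℱ n ⊆ 𝒰 n ∧ (ℱ n).Finite) ∧
        IsOmegaCover (⋃ n, ℱ n))
    (hinf : ∀ 𝒰 : Set (Set α), (∀ U ∈ 𝒰, IsOpen U) → IsOmegaCover 𝒰 →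
      ∃ 𝒱 : ℕ → Set (Set α), (∀ n, 𝒱 n ⊆ 𝒰 ∧ (𝒱 n).Infinite) ∧
        IsOmegaCover (Set.range fun n => ⋂₀ 𝒱 n)) :
    ∀ 𝒰 : ℕ → Set (Set α),
      (∀ n, (∀ U ∈ 𝒰 n, IsOpen U) ∧ IsOmegaCover (𝒰 n)) →
      ∃ U : ℕ → Set α, (∀ n, U n ∈ 𝒰 n) ∧ IsOmegaCover (Set.range U) := by
  classical
  intro 𝒰 h𝒰
  obtain ⟨ℱ, hℱ, hℱcov⟩ := hsfin 𝒰 h𝒰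
  obtain ⟨𝒱, h𝒱, h𝒱cov⟩ := hinf (⋃ n, ℱ n)
    (by
      intro U hU
      simp only [mem_iUnion] at hU
      obtain ⟨m, hm⟩ := hU
      exact (h𝒰 m).1 U ((hℱ m).1 hm))
    hℱcov
  -- key: for each k and bound b there is m ≥ b with 𝒱 k meeting ℱ m
  have key : ∀ k b, ∃ m, b ≤ m ∧ (𝒱 k ∩ ℱ m).Nonempty := by
    intro k b
    have hfin : (⋃ m ∈ Finset.range b, ℱ m).Finite :=
      Set.Finite.biUnion (Finset.range b).finite_toSet (fun m _ => (hℱ m).2)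
    obtain ⟨W, hW1, hW2⟩ := ((h𝒱 k).2.diff hfin).nonempty
    have hWu : W ∈ ⋃ m, ℱ m := (h𝒱 k).1 hW1
    simp only [mem_iUnion] at hWu
    obtain ⟨m, hm⟩ := hWu
    refine ⟨m, ?_, W, hW1, hm⟩
    by_contra h
    exact hW2 (by
      simp only [mem_iUnion]
      exact ⟨m, Finset.mem_range.mpr (lt_of_not_ge h), hm⟩)
  choose f hf1 hf2 using key
  set n : ℕ → ℕ := fun k => Nat.rec (f 0 0) (fun k prev => f (k + 1) (prev + 1)) k with hn
  have hmono : StrictMono n :=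
    strictMono_nat_of_lt_succ fun k =>
      lt_of_lt_of_le (Nat.lt_succ_self _) (hf1 (k + 1) (n k + 1))
  have hWk : ∀ k, (𝒱 k ∩ ℱ (n k)).Nonempty := by
    intro k
    cases k with
    | zero => exact hf2 0 0
    | succ k => exact hf2 (k + 1) (n k + 1)
  choose W hW𝒱 hWℱ using hWk
  have hdd : ∀ m, ∃ V, V ∈ 𝒰 m := by
    intro m
    obtain ⟨V, hV, -⟩ := (h𝒰 m).2.2 ∅ finite_empty
    exact ⟨V, hV⟩
  choose d hd using hdd
  set U : ℕ → Set α := fun m => if h : ∃ k, n k = m then W h.choose else d m with hU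
  have hUnk : ∀ k, U (n k) = W k := by
    intro k
    have h : ∃ j, n j = n k := ⟨k, rfl⟩
    simp only [hU, dif_pos h]
    exact congrArg W (hmono.injective h.choose_spec)
  have hmem : ∀ m, U m ∈ 𝒰 m := by
    intro m
    by_cases h : ∃ k, n k = m
    · simp only [hU, dif_pos h]
      have := hWℱ h.choose
      rw [h.choose_spec] at this
      exact (hℱ m).1 this
    · simp only [hU, dif_neg h]; exact hd m
  refine ⟨U, hmem, ?_, ?_⟩
  · rintro ⟨m, hm⟩
    have := hmem m
    rw [hm] at this
    exact (h𝒰 m).2.1 this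
  · intro F hF
    obtain ⟨V, hV, hFV⟩ := h𝒱cov.2 F hF
    obtain ⟨k, rfl⟩ := hV
    refine ⟨U (n k), mem_range_self _, ?_⟩
    rw [hUnk k]
    exact hFV.trans (sInter_subset_of_mem (hW𝒱 k))
end

section
/- For topological spaces, S_fin(Ω, Ω_∞) = S₁(Ω, Ω_∞): a space satisfies 'for each sequence of open ω-covers there are finite selections whose union is in Ω_∞' if and only if it satisfies 'for each sequence of open ω-covers one can pick a single member from each so that the chosen family is in Ω_∞'. -/
open Set

/-- `𝒱 ∈ Ω_∞`: there are infinite subsets 𝒱ₙ ⊆ 𝒱 with {⋂𝒱ₙ : n} an ω-cover. -/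
def MemOmegaInf {α : Type*} (𝒱 : Set (Set α)) : Prop :=
  ∃ 𝒲 : ℕ → Set (Set α), (∀ n, 𝒲 n ⊆ 𝒱 ∧ (𝒲 n).Infinite) ∧
    IsOmegaCover (Set.range fun n => ⋂₀ 𝒲 n)

/-- From families `g m` that always contain an element whose `f`-value avoids any
finite set, we can select `W m ∈ g m` with `f ∘ W` injective. -/
lemma exists_inj_selection {α : Type*} (g : ℕ → Set (Set α)) (f : Set α → ℕ)
    (hg : ∀ m, ∀ S : Finset ℕ, ∃ W ∈ g m, f W ∉ S) :
    ∃ W : ℕ → Set α, (∀ m, W m ∈ g m) ∧ Function.Injective (f ∘ W) := by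
  choose pick hpick1 hpick2 using hg
  let h : ℕ → Set α × Finset ℕ :=
    fun m => Nat.rec (pick 0 ∅, {f (pick 0 ∅)})
      (fun m p => (pick (m+1) p.2, insert (f (pick (m+1) p.2)) p.2)) m
  have hsucc : ∀ m, h (m+1) = (pick (m+1) (h m).2, insert (f (pick (m+1) (h m).2)) (h m).2) :=
    fun m => rfl
  refine ⟨fun m => (h m).1, ?_, ?_⟩
  · intro m
    cases m with
    | zero => exact hpick1 0 ∅
    | succ m => exact hpick1 (m+1) (h m).2
  · have hmem : ∀ m, f (h m).1 ∈ (h m).2 := by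
      intro m
      cases m with
      | zero => exact Finset.mem_singleton_self _
      | succ m => rw [hsucc]; exact Finset.mem_insert_self _ _
    have hmono : ∀ i j, i ≤ j → (h i).2 ⊆ (h j).2 := by
      intro i j hij
      induction j with
      | zero => simp_all
      | succ j ih =>
        rcases Nat.lt_succ_iff_lt_or_eq.mp (Nat.lt_succ_of_le hij) with hlt | rfl
        · exact (ih (Nat.lt_succ_iff.mp hlt)).trans
            (by rw [hsucc]; exact Finset.subset_insert _ _)
        · exact subset_rfl
    have hnot : ∀ m, f (h (m+1)).1 ∉ (h m).2 := by
      intro m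
      rw [hsucc]
      exact hpick2 (m+1) (h m).2
    have key : ∀ i j, i < j → f (h i).1 ≠ f (h j).1 := by
      intro i j hij he
      obtain ⟨m, rfl⟩ := Nat.exists_eq_add_of_lt hij
      exact hnot (i + m) (he ▸ hmono i (i + m) (Nat.le_add_right i m) (hmem i))
    intro i j hij
    by_contra hne
    rcases lt_or_gt_of_ne hne with hlt | hlt
    · exact key i j hlt hij
    · exact key j i hlt hij.symm

/-- S_fin(Ω, Ω_∞) = S₁(Ω, Ω_∞). -/
theorem stmt12 {α : Type*} [TopologicalSpace α] :
    (∀ 𝒰 : ℕ → Set (Set α),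
      (∀ n, (∀ U ∈ 𝒰 n, IsOpen U) ∧ IsOmegaCover (𝒰 n)) →
      ∃ ℱ : ℕ → Set (Set α), (∀ n, ℱ n ⊆ 𝒰 n ∧ (ℱ n).Finite) ∧
        MemOmegaInf (⋃ n, ℱ n)) ↔
    (∀ 𝒰 : ℕ → Set (Set α),
      (∀ n, (∀ U ∈ 𝒰 n, IsOpen U) ∧ IsOmegaCover (𝒰 n)) →
      ∃ U : ℕ → Set α, (∀ n, U n ∈ 𝒰 n) ∧ MemOmegaInf (Set.range U)) := by
  constructor
  · -- S_fin(Ω,Ω_∞) → S₁(Ω,Ω_∞)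
    intro h 𝒰 h𝒰
    classical
    obtain ⟨ℱ, hℱ, 𝒲, h𝒲, hcov⟩ := h 𝒰 h𝒰
    -- a default member of each 𝒰 n
    choose U₀ hU₀ _ using fun n => (h𝒰 n).2.2 ∅ finite_empty
    -- a choice of index for each member of ⋃ ℱ
    have hf0 : ∀ V : Set α, ∃ n, V ∈ ⋃ i, ℱ i → V ∈ ℱ n := by
      intro V
      by_cases hV : V ∈ ⋃ i, ℱ i
      · obtain ⟨n, hn⟩ := mem_iUnion.mp hV
        exact ⟨n, fun _ => hn⟩
      · exact ⟨0, fun hc => absurd hc hV⟩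
    choose f hf using hf0
    -- the families to select from, indexed by pairing
    set g : ℕ → Set (Set α) := fun m => 𝒲 (Nat.unpair m).1 with hg_def
    have hg : ∀ m, ∀ S : Finset ℕ, ∃ W ∈ g m, f W ∉ S := by
      intro m S
      by_contra hc
      push_neg at hc
      have hsub : g m ⊆ ⋃ n ∈ (S : Set ℕ), ℱ n := by
        intro V hV
        have hVU : V ∈ ⋃ i, ℱ i := (h𝒲 (Nat.unpair m).1).1 hV
        exact mem_biUnion (hc V hV) (hf V hVU)
      exact (h𝒲 (Nat.unpair m).1).2
        (((S.finite_toSet.biUnion fun n _ => (hℱ n).2).subset hsub))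
    obtain ⟨W, hWmem, hWinj⟩ := exists_inj_selection g f hg
    have hWU : ∀ m, W m ∈ ⋃ i, ℱ i := fun m => (h𝒲 (Nat.unpair m).1).1 (hWmem m)
    -- the selection
    set U : ℕ → Set α := fun n =>
      if hn : ∃ m, f (W m) = n then W hn.choose else U₀ n with hU_def
    have hUW : ∀ m, U (f (W m)) = W m := by
      intro m
      have hn : ∃ m', f (W m') = f (W m) := ⟨m, rfl⟩
      have : U (f (W m)) = W hn.choose := dif_pos hn
      rw [this]
      exact congrArg W (hWinj hn.choose_spec)
    have hUmem : ∀ n, U n ∈ 𝒰 n := by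
      intro n
      by_cases hn : ∃ m, f (W m) = n
      · have h1 : U n = W hn.choose := dif_pos hn
        have h2 := hf _ (hWU hn.choose)
        rw [hn.choose_spec] at h2
        rw [h1]
        exact (hℱ n).1 h2
      · have h1 : U n = U₀ n := dif_neg hn
        rw [h1]; exact hU₀ n
    -- the shrunken witness families
    set 𝒲' : ℕ → Set (Set α) := fun k => W '' {m | (Nat.unpair m).1 = k} with h𝒲'_def
    have hWinj' : Function.Injective W := Function.Injective.of_comp hWinj
    have h𝒲'sub : ∀ k, 𝒲' k ⊆ 𝒲 k := by
      rintro k V ⟨m, hm, rfl⟩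
      rw [← hm]
      exact hWmem m
    have hpairmem : ∀ k j, W (Nat.pair k j) ∈ 𝒲' k :=
      fun k j => ⟨Nat.pair k j, by simp, rfl⟩
    refine ⟨U, hUmem, 𝒲', fun k => ⟨?_, ?_⟩, ?_, ?_⟩
    · rintro V ⟨m, _, rfl⟩
      exact ⟨f (W m), hUW m⟩
    · refine Set.Infinite.image (fun a _ b _ hab => hWinj' hab) ?_
      apply Set.infinite_of_injective_forall_mem (f := fun j => Nat.pair k j)
      · intro a b hab
        exact ((Nat.pair_eq_pair.mp hab)).2
      · intro j
        simp
    · -- univ not in the range of intersections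
      rintro ⟨k, hk⟩
      have h1 : ⋂₀ 𝒲' k ⊆ W (Nat.pair k 0) := sInter_subset_of_mem (hpairmem k 0)
      have h2 : W (Nat.pair k 0) = univ := univ_subset_iff.mp (hk ▸ h1)
      have h3 : W (Nat.pair k 0) ∈ 𝒰 (f (W (Nat.pair k 0))) :=
        (hℱ _).1 (hf _ (hWU _))
      rw [h2] at h3
      exact (h𝒰 _).2.1 h3
    · -- finite sets are contained in some intersection
      intro F hF
      obtain ⟨V, ⟨k, rfl⟩, hFV⟩ := hcov.2 F hF
      refine ⟨⋂₀ 𝒲' k, ⟨k, rfl⟩, ?_⟩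
      intro x hx
      rw [mem_sInter]
      intro V hV
      exact (hFV hx : x ∈ ⋂₀ 𝒲 k) V (h𝒲'sub k hV)
  · -- S₁ → S_fin
    intro h 𝒰 h𝒰
    obtain ⟨U, hU, hMOI⟩ := h 𝒰 h𝒰
    refine ⟨fun n => {U n}, fun n => ⟨singleton_subset_iff.mpr (hU n), finite_singleton _⟩, ?_⟩
    rwa [iUnion_singleton_eq_range]
end

section
/- Let X be a Lindelöf zero-dimensional space satisfying U_fin(O, O_∞). Then every continuous image of X in ℕ^ℕ is bounded (with respect to eventual dominance ≤*). Consequently (by Hurewicz's/Recław's characterization) X satisfies the Hurewicz property U_fin(O,Γ). -/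
open Set Filter

/-- `𝒱 ∈ O_∞`: there are infinite subsets 𝒱ₘ ⊆ 𝒱 with {⋂𝒱ₘ : m} a cover. -/
def MemOInf {α : Type*} (𝒱 : Set (Set α)) : Prop :=
  ∃ 𝒲 : ℕ → Set (Set α), (∀ m, 𝒲 m ⊆ 𝒱 ∧ (𝒲 m).Infinite) ∧
    IsCover (Set.range fun m => ⋂₀ 𝒲 m)

lemma aux_mono_bound {α : Type*} {u : ℕ → Set α} (hu : Monotone u) {𝒮 : Set (Set α)}
    (h : 𝒮 ⊆ Set.range u) (hf : 𝒮.Finite) : ∃ m, ⋃₀ 𝒮 ⊆ u m := by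
  classical
  set φ : Set α → ℕ := fun W => if hW : ∃ m, u m = W then hW.choose else 0 with hφ
  refine ⟨hf.toFinset.sup φ, sUnion_subset ?_⟩
  intro W hW
  obtain ⟨m, hm⟩ := h hW
  have hWex : ∃ m, u m = W := ⟨m, hm⟩
  have hWeq : u (φ W) = W := by simp only [hφ, dif_pos hWex]; exact hWex.choose_spec
  calc W = u (φ W) := hWeq.symm
    _ ⊆ u (hf.toFinset.sup φ) := hu (Finset.le_sup (by simpa using hW))

theorem stmt13_part1 {α : Type*} [TopologicalSpace α]
    (hufin : ∀ 𝒰 : ℕ → Set (Set α),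
      (∀ n, (∀ U ∈ 𝒰 n, IsOpen U) ∧ ⋃₀ 𝒰 n = univ ∧
        ¬ ∃ ℱ ⊆ 𝒰 n, ℱ.Finite ∧ ⋃₀ ℱ = univ) →
      ∃ ℱ : ℕ → Set (Set α), (∀ n, ℱ n ⊆ 𝒰 n ∧ (ℱ n).Finite) ∧
        MemOInf (Set.range fun n => ⋃₀ ℱ n)) :
    (∀ Φ : α → (ℕ → ℕ), Continuous Φ →
      ∃ g : ℕ → ℕ, ∀ x : α, ∀ᶠ n in atTop, Φ x n ≤ g n) := by
  classical
  intro Φ hΦ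
  by_cases hB : ∀ n, ∃ m, ∀ x, Φ x n ≤ m
  · choose g hg using hB
    exact ⟨g, fun x => Eventually.of_forall fun n => hg n x⟩
  push_neg at hB
  obtain ⟨k0, hk0⟩ := hB
  -- hk0 : ∀ m, ∃ x, m < Φ x k0
  set U : ℕ → ℕ → Set α := fun j m => {x | ∀ i ≤ j + k0, Φ x i ≤ m} with hU
  have hUmono : ∀ j, Monotone (U j) := by
    intro j m m' hmm' x hx i hi
    exact le_trans (hx i hi) hmm'
  have hUopen : ∀ j m, IsOpen (U j m) := by
    intro j m
    have : U j m = ⋂ i ∈ Finset.range (j + k0 + 1), (fun x => Φ x i) ⁻¹' (Iic m) := by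
      ext x
      simp only [hU, mem_setOf_eq, mem_iInter, Finset.mem_range, mem_preimage, mem_Iic,
        Nat.lt_succ_iff]
    rw [this]
    exact isOpen_biInter_finset fun i _ =>
      (isOpen_discrete (Iic m)).preimage ((continuous_apply i).comp hΦ)
  have hUcov : ∀ j, ⋃₀ Set.range (U j) = univ := by
    intro j
    refine eq_univ_of_forall fun x => ?_
    refine ⟨U j ((Finset.range (j + k0 + 1)).sup (Φ x)), ⟨_, rfl⟩, ?_⟩
    intro i hi
    exact Finset.le_sup (Finset.mem_range.2 (Nat.lt_succ_of_le hi))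
  have hUnfs : ∀ j, ¬ ∃ ℱ ⊆ Set.range (U j), ℱ.Finite ∧ ⋃₀ ℱ = univ := by
    intro j ⟨ℱ, hsub, hfin, hcov⟩
    obtain ⟨m, hm⟩ := aux_mono_bound (hUmono j) hsub hfin
    obtain ⟨x, hx⟩ := hk0 m
    have : x ∈ U j m := hm (hcov ▸ mem_univ x)
    exact absurd (this k0 (Nat.le_add_left k0 j)) (not_le.2 hx)
  obtain ⟨ℱ, hℱ, 𝒲, h𝒲, hWc⟩ := hufin (fun j => Set.range (U j))
    (fun j => ⟨fun V ⟨m, hm⟩ => hm ▸ hUopen j m, hUcov j, hUnfs j⟩)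
  set V : ℕ → Set α := fun j => ⋃₀ ℱ j with hV
  choose m hm using fun j => aux_mono_bound (hUmono j) (hℱ j).1 (hℱ j).2
  -- index sets are infinite
  have hI : ∀ i, {j | V j ∈ 𝒲 i}.Infinite := by
    intro i
    by_contra hfin
    rw [Set.not_infinite] at hfin
    refine (h𝒲 i).2 ((hfin.image V).subset fun S hS => ?_)
    obtain ⟨j, hj⟩ := (h𝒲 i).1 hS
    exact ⟨j, show V j ∈ 𝒲 i from hj.symm ▸ hS, hj⟩
  choose jf hjf1 hjf2 using fun i n => (hI i).exists_gt n
  refine ⟨fun n => (Finset.range (n + 1)).sup fun i => m (jf i n), fun x => ?_⟩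
  have hxc : x ∈ ⋃₀ Set.range fun i => ⋂₀ 𝒲 i := hWc.2 ▸ mem_univ x
  obtain ⟨_, ⟨i, rfl⟩, hxi⟩ := hxc
  rw [eventually_atTop]
  refine ⟨i, fun n hn => ?_⟩
  have hxV : x ∈ V (jf i n) := hxi _ (hjf1 i n)
  have hxU : x ∈ U (jf i n) (m (jf i n)) := hm _ hxV
  have h1 : Φ x n ≤ m (jf i n) := hxU n (le_trans (le_of_lt (hjf2 i n)) (Nat.le_add_right _ _))
  exact le_trans h1 (Finset.le_sup (f := fun i => m (jf i n)) (Finset.mem_range.2 (Nat.lt_succ_of_le hn)))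

theorem stmt13_part2 {α : Type*} [TopologicalSpace α] [LindelofSpace α]
    (hzd : TopologicalSpace.IsTopologicalBasis {s : Set α | IsClopen s})
    (hbd : ∀ Φ : α → (ℕ → ℕ), Continuous Φ →
      ∃ g : ℕ → ℕ, ∀ x : α, ∀ᶠ n in atTop, Φ x n ≤ g n) :
    ∀ 𝒰 : ℕ → Set (Set α),
      (∀ n, (∀ U ∈ 𝒰 n, IsOpen U) ∧ ⋃₀ 𝒰 n = univ ∧
        ¬ ∃ ℱ ⊆ 𝒰 n, ℱ.Finite ∧ ⋃₀ ℱ = univ) →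
      ∃ ℱ : ℕ → Set (Set α), (∀ n, ℱ n ⊆ 𝒰 n ∧ (ℱ n).Finite) ∧
        IsGammaCover (Set.range fun n => ⋃₀ ℱ n) := by
  classical
  intro 𝒰 h𝒰
  have hne : Nonempty α := by
    by_contra h
    rw [not_nonempty_iff] at h
    exact (h𝒰 0).2.2 ⟨∅, empty_subset _, finite_empty, by simp [Set.univ_eq_empty_iff.2 h]⟩
  -- countable clopen refinements
  have hC : ∀ n, ∃ C : ℕ → Set α,
      (∀ i, IsClopen (C i) ∧ ∃ U ∈ 𝒰 n, C i ⊆ U) ∧ ⋃ i, C i = univ := by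
    intro n
    set 𝒞 : Set (Set α) := {S | IsClopen S ∧ ∃ U ∈ 𝒰 n, S ⊆ U} with h𝒞
    have hcov : (univ : Set α) ⊆ ⋃ S : 𝒞, (S : Set α) := by
      intro x _
      have hx : x ∈ ⋃₀ 𝒰 n := (h𝒰 n).2.1 ▸ mem_univ x
      obtain ⟨Uu, hUu, hxU⟩ := hx
      obtain ⟨v, hv, hxv, hvU⟩ := hzd.exists_subset_of_mem_open hxU ((h𝒰 n).1 Uu hUu)
      exact mem_iUnion.2 ⟨⟨v, hv, Uu, hUu, hvU⟩, hxv⟩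
    obtain ⟨r, hrc, hrcov⟩ := isLindelof_univ.elim_countable_subcover
      (fun S : 𝒞 => (S : Set α)) (fun S => S.2.1.isOpen) hcov
    have hrne : r.Nonempty := by
      rcases mem_iUnion₂.1 (hrcov (mem_univ (Classical.arbitrary α))) with ⟨S, hS, _⟩
      exact ⟨S, hS⟩
    obtain ⟨f, hf⟩ := hrc.exists_eq_range hrne
    refine ⟨fun i => ((f i : Set α)), fun i => ⟨(f i).2.1, (f i).2.2⟩, ?_⟩
    refine eq_univ_of_forall fun x => ?_
    have := hrcov (mem_univ x)
    rw [hf] at this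
    rcases mem_iUnion₂.1 this with ⟨S, ⟨i, rfl⟩, hxS⟩
    exact mem_iUnion.2 ⟨i, hxS⟩
  choose C hC1 hC2 using hC
  set W : ℕ → ℕ → Set α := fun n m => ⋃ i ∈ Finset.range (m + 1), C n i with hWdef
  have hWcl : ∀ n m, IsClopen (W n m) := fun n m =>
    isClopen_biUnion_finset fun i _ => (hC1 n i).1
  have hWmono : ∀ n, Monotone (W n) := by
    intro n m m' hmm' y hy
    rcases mem_iUnion₂.1 hy with ⟨i, hi, hyi⟩
    refine mem_iUnion₂.2 ⟨i, Finset.mem_range.2 ?_, hyi⟩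
    have := Finset.mem_range.1 hi
    omega
  have hWcov : ∀ x n, ∃ m, x ∈ W n m := by
    intro x n
    have : x ∈ ⋃ i, C n i := (hC2 n) ▸ mem_univ x
    obtain ⟨i, hi⟩ := mem_iUnion.1 this
    exact ⟨i, mem_biUnion (Finset.self_mem_range_succ i) hi⟩
  set Φ : α → ℕ → ℕ := fun x n => Nat.find (hWcov x n) with hΦdef
  have hΦcont : Continuous Φ := by
    refine continuous_pi fun n => continuous_discrete_rng.2 fun m => ?_
    have hpre : (fun x => Φ x n) ⁻¹' {m} =
        W n m ∩ ⋂ k ∈ Finset.range m, (W n k)ᶜ := by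
      ext x
      simp only [mem_preimage, mem_singleton_iff, hΦdef, Nat.find_eq_iff, mem_inter_iff,
        mem_iInter, Finset.mem_range, mem_compl_iff]
    rw [hpre]
    exact ((hWcl n m).isOpen).inter
      (isOpen_biInter_finset fun k _ => (hWcl n k).compl.isOpen)
  obtain ⟨g, hg⟩ := hbd Φ hΦcont
  have hu' : ∀ n i, ∃ U ∈ 𝒰 n, C n i ⊆ U := fun n i => (hC1 n i).2
  choose u hu1 hu2 using hu'
  set ℱ₀ : ℕ → Set (Set α) := fun n => u n '' Iic (g n) with hℱ₀def
  have hw' : ∀ (a : α) n, ∃ S ∈ 𝒰 n, a ∈ S := fun a n =>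
    ((h𝒰 n).2.1 ▸ mem_univ a : a ∈ ⋃₀ 𝒰 n)
  choose w hw1 hw2 using hw'
  set F : (ℕ → α) → ℕ → Set (Set α) :=
    fun f n => ℱ₀ n ∪ (fun i => w (f i) n) '' Iio n with hFdef
  have hFsub : ∀ f n, F f n ⊆ 𝒰 n := by
    rintro f n S (⟨i, _, rfl⟩ | ⟨i, _, rfl⟩)
    · exact hu1 n i
    · exact hw1 (f i) n
  have hFfin : ∀ f n, (F f n).Finite :=
    fun f n => ((finite_Iic (g n)).image (u n)).union ((finite_Iio n).image _)
  have hFne : ∀ f n, ∃ a, a ∉ ⋃₀ F f n := by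
    intro f n
    by_contra h
    push_neg at h
    exact (h𝒰 n).2.2 ⟨F f n, hFsub f n, hFfin f n, eq_univ_of_forall h⟩
  set pick2 : Set (Set α) → α :=
    fun G => if h : ∃ a, a ∉ ⋃₀ G then h.choose else Classical.arbitrary α with hpick2def
  have hpick2 : ∀ G : Set (Set α), (∃ a, a ∉ ⋃₀ G) → pick2 G ∉ ⋃₀ G := by
    intro G h
    simp only [hpick2def, dif_pos h]
    exact h.choose_spec
  set P : ℕ → ℕ → α := fun n => Nat.rec (fun _ => Classical.arbitrary α)
    (fun k Pk => Function.update Pk k (pick2 (F Pk k))) n with hPdef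
  set x : ℕ → α := fun n => P (n + 1) n with hxdef
  have hPsucc : ∀ k, P (k + 1) = Function.update (P k) k (pick2 (F (P k) k)) := fun k => rfl
  have hP : ∀ k m, m < k → P k m = x m := by
    intro k
    induction k with
    | zero => omega
    | succ k ih =>
      intro m hm
      rcases Nat.lt_succ_iff_lt_or_eq.1 hm with hm' | rfl
      · rw [hPsucc, Function.update_of_ne (Nat.ne_of_lt hm'), ih m hm']
      · rfl
  have hFcongr : ∀ (f f' : ℕ → α) n, (∀ m, m < n → f m = f' m) → F f n = F f' n := by
    intro f f' n h
    simp only [hFdef]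
    congr 1
    exact Set.image_congr fun i hi => by rw [h i hi]
  have hxeq : ∀ n, x n = pick2 (F x n) := by
    intro n
    have h1 : x n = pick2 (F (P n) n) := by
      show P (n + 1) n = _
      rw [hPsucc, Function.update_self]
    rw [h1, hFcongr (P n) x n (fun m hm => hP n m hm)]
  have hxout : ∀ n, x n ∉ ⋃₀ F x n := fun n => (hxeq n) ▸ hpick2 _ (hFne x n)
  set V : ℕ → Set α := fun n => ⋃₀ F x n with hVdef
  have hin : ∀ i n, i < n → x i ∈ V n := fun i n hi =>
    ⟨w (x i) n, Or.inr ⟨i, hi, rfl⟩, hw2 (x i) n⟩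
  have hVinj : Function.Injective V := by
    intro n n' h
    by_contra hne'
    rcases Nat.lt_trichotomy n n' with hlt | heq | hlt
    · have hx2 : x n ∈ V n := by rw [h]; exact hin n n' hlt
      exact hxout n hx2
    · exact hne' heq
    · have hx2 : x n' ∈ V n' := by rw [← h]; exact hin n' n hlt
      exact hxout n' hx2
  refine ⟨fun n => F x n, fun n => ⟨hFsub x n, hFfin x n⟩, ?_, ?_, ?_⟩
  · exact Set.infinite_range_of_injective hVinj
  · rintro ⟨n, hn⟩
    exact (h𝒰 n).2.2 ⟨F x n, hFsub x n, hFfin x n, hn⟩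
  · intro p
    have hev : ∀ᶠ n in atTop, p ∈ V n := by
      filter_upwards [hg p] with n hn
      have hp1 : p ∈ W n (Φ p n) := Nat.find_spec (hWcov p n)
      have hp2 : p ∈ W n (g n) := hWmono n hn hp1
      rcases mem_iUnion₂.1 hp2 with ⟨i, hi, hpi⟩
      exact ⟨u n i, Or.inl ⟨i, by simpa [Nat.lt_succ_iff] using hi, rfl⟩, hu2 n i hpi⟩
    obtain ⟨N, hN⟩ := eventually_atTop.1 hev
    refine Set.Finite.subset ((finite_Iio N).image V) ?_
    rintro S ⟨⟨n, rfl⟩, hpS⟩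
    refine ⟨n, ?_, rfl⟩
    by_contra hn
    exact hpS (hN n (le_of_not_gt hn))


/-- A Lindelöf zero-dimensional space satisfying U_fin(O, O_∞) has all of its continuous
images in ℕ^ℕ bounded with respect to eventual dominance, and hence satisfies the
Hurewicz property U_fin(O, Γ). -/
theorem stmt13 {α : Type*} [TopologicalSpace α] [LindelofSpace α]
    (hzd : TopologicalSpace.IsTopologicalBasis {s : Set α | IsClopen s})
    (hufin : ∀ 𝒰 : ℕ → Set (Set α),
      (∀ n, (∀ U ∈ 𝒰 n, IsOpen U) ∧ ⋃₀ 𝒰 n = univ ∧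
        ¬ ∃ ℱ ⊆ 𝒰 n, ℱ.Finite ∧ ⋃₀ ℱ = univ) →
      ∃ ℱ : ℕ → Set (Set α), (∀ n, ℱ n ⊆ 𝒰 n ∧ (ℱ n).Finite) ∧
        MemOInf (Set.range fun n => ⋃₀ ℱ n)) :
    (∀ Φ : α → (ℕ → ℕ), Continuous Φ →
      ∃ g : ℕ → ℕ, ∀ x : α, ∀ᶠ n in atTop, Φ x n ≤ g n) ∧
    (∀ 𝒰 : ℕ → Set (Set α),
      (∀ n, (∀ U ∈ 𝒰 n, IsOpen U) ∧ ⋃₀ 𝒰 n = univ ∧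
        ¬ ∃ ℱ ⊆ 𝒰 n, ℱ.Finite ∧ ⋃₀ ℱ = univ) →
      ∃ ℱ : ℕ → Set (Set α), (∀ n, ℱ n ⊆ 𝒰 n ∧ (ℱ n).Finite) ∧
        IsGammaCover (Set.range fun n => ⋃₀ ℱ n)) := by
  exact ⟨stmt13_part1 hufin, stmt13_part2 hzd (stmt13_part1 hufin)⟩
end

section
/- Let Y ⊆ ℕ^ℕ consist of increasing functions, and suppose g ∈ ℕ^ℕ and (𝒱ₘ) are infinite subfamilies of {U^n_{g(n)} : n ≥ k}, where U^n_m = {f ∈ Y : f(n) ≤ m}, such that {⋂𝒱ₘ : m ∈ ℕ} covers Y. Then Y is bounded with respect to eventual dominance: there is h ∈ ℕ^ℕ with f ≤* h for all f ∈ Y. -/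
open Set Filter

/-- If Y consists of increasing functions and the infinite subfamilies 𝒱ₘ of
{U^n_{g(n)} : n ≥ k}, where U^n_m = {f ∈ Y : f(n) ≤ m}, satisfy that {⋂𝒱ₘ : m} covers Y,
then Y is bounded with respect to eventual dominance. -/
theorem stmt14 (Y : Set (ℕ → ℕ)) (hmono : ∀ f ∈ Y, Monotone f)
    (g : ℕ → ℕ) (k : ℕ) (𝒱 : ℕ → Set (Set (ℕ → ℕ)))
    (hsub : ∀ m, 𝒱 m ⊆ {S | ∃ n ≥ k, S = {f ∈ Y | f n ≤ g n}})
    (hinf : ∀ m, (𝒱 m).Infinite)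
    (hcov : Y ⊆ ⋃ m, ⋂₀ 𝒱 m) :
    ∃ h : ℕ → ℕ, ∀ f ∈ Y, ∀ᶠ n in atTop, f n ≤ h n := by
  classical
  set I : ℕ → Set ℕ := fun m => {n | n ≥ k ∧ {f ∈ Y | f n ≤ g n} ∈ 𝒱 m} with hI
  have hIinf : ∀ m, (I m).Infinite := by
    intro m
    by_contra hfin
    rw [Set.not_infinite] at hfin
    have hsub2 : (𝒱 m) ⊆ (fun n => {f ∈ Y | f n ≤ g n}) '' I m := by
      intro S hS
      obtain ⟨n, hnk, rfl⟩ := hsub m hS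
      exact ⟨n, ⟨hnk, hS⟩, rfl⟩
    exact hinf m ((hfin.image _).subset hsub2)
  have hφ : ∀ m n, ∃ i, i ∈ I m ∧ n ≤ i := fun m n =>
    ((hIinf m).exists_gt n).imp fun i ⟨hi, h⟩ => ⟨hi, h.le⟩
  choose φ hφI hφge using hφ
  refine ⟨fun n => Finset.sup (Finset.range (n+1)) (fun m => g (φ m n)), ?_⟩
  intro f hf
  obtain ⟨m, hm⟩ := Set.mem_iUnion.mp (hcov hf)
  filter_upwards [eventually_ge_atTop m] with n hn
  have hfn : f n ≤ g (φ m n) := by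
    have hmem : f ∈ {f ∈ Y | f (φ m n) ≤ g (φ m n)} := hm _ (hφI m n).2
    exact (hmono f hf (hφge m n)).trans hmem.2
  exact hfn.trans (Finset.le_sup (f := fun m => g (φ m n)) (Finset.mem_range.mpr (Nat.lt_succ_of_le hn)))
end

section
/- If 𝒰 is a countable clopen ω-cover of a space X with bijective enumeration 𝒰 = {Uₙ : n ∈ ℕ}, then the Marczewski map μ : X → P(ℕ), μ(x) = {n : x ∈ Uₙ}, is continuous, and its image is a free centered subset of [ℕ]^∞ (the infinite subsets of ℕ). -/
open Set

/-- For a countable clopen ω-cover 𝒰 = {Uₙ : n} (bijectively enumerated), the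
Marczewski map μ(x) = {n : x ∈ Uₙ}, viewed as a map into {0,1}^ℕ ≅ P(ℕ),
is continuous, and its image is a free centered family of infinite subsets of ℕ. -/
theorem stmt16 {α : Type*} [TopologicalSpace α] (U : ℕ → Set α)
    (hinj : Function.Injective U)
    (hclopen : ∀ n, IsClopen (U n))
    (hne : ∀ n, U n ≠ univ)
    (hω : ∀ F : Set α, F.Finite → ∃ n, F ⊆ U n)
    (μ : α → ℕ → Bool)
    (hμ : ∀ x n, μ x n = true ↔ x ∈ U n) :
    Continuous μ ∧
    -- the image is free
    (∀ n : ℕ, ∃ x : α, μ x n = false) ∧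
    -- the image is centered (in particular each member is an infinite subset of ℕ)
    (∀ T : Finset α, {n : ℕ | ∀ x ∈ T, μ x n = true}.Infinite) := by
  refine ⟨?_, ?_, ?_⟩
  · apply continuous_pi
    intro n
    rw [continuous_discrete_rng]
    intro b
    cases b
    · have : (fun x => μ x n) ⁻¹' {false} = (U n)ᶜ := by
        ext x
        simp [Set.mem_preimage, ← hμ x n]
      rw [this]
      exact (hclopen n).compl.isOpen
    · have : (fun x => μ x n) ⁻¹' {true} = U n := by
        ext x
        simp [Set.mem_preimage, hμ x n]
      rw [this]
      exact (hclopen n).isOpen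
  · intro n
    have : ∃ x, x ∉ U n := by
      by_contra h
      push_neg at h
      exact hne n (eq_univ_of_forall h)
    obtain ⟨x, hx⟩ := this
    refine ⟨x, ?_⟩
    rw [Bool.eq_false_iff]
    intro h
    exact hx ((hμ x n).1 h)
  · intro T
    rw [Set.infinite_coe_iff.symm]
    by_contra hfin
    rw [not_infinite_iff_finite] at hfin
    have hf : {n : ℕ | ∀ x ∈ T, μ x n = true}.Finite := Set.toFinite _
    -- for each bad index m, pick a witness outside U m
    have hw : ∀ m : ℕ, ∃ y, y ∉ U m := by
      intro m
      by_contra h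
      push_neg at h
      exact hne m (eq_univ_of_forall h)
    choose y hy using hw
    set S := hf.toFinset
    have hF : ((T : Set α) ∪ (y '' S)).Finite :=
      (T.finite_toSet).union (S.finite_toSet.image y)
    obtain ⟨n, hn⟩ := hω _ hF
    have hnS : n ∈ S := by
      simp only [S, Set.Finite.mem_toFinset, Set.mem_setOf_eq]
      intro x hx
      exact (hμ x n).2 (hn (Or.inl hx))
    have : y n ∈ U n := hn (Or.inr ⟨n, by simpa using hnS, rfl⟩)
    exact hy n this
end

section
/- Suppose X is a space with a countable clopen ω-cover 𝒰 = {Uₙ : n ∈ ℕ} (bijectively enumerated), and suppose the image ℱ of the Marczewski map μ(x) = {n : x ∈ Uₙ} decomposes as ℱ = ⋃ₙ ℱₙ where each ℱₙ has a pseudo-intersection Aₙ ⊆ ℕ. Then, setting 𝒰_{n,m} = {U_k : k ∈ Aₙ, k ≥ m}, each 𝒰_{n,m} is an infinite subset of 𝒰 and {⋂𝒰_{n,m} : n, m ∈ ℕ} is a cover of X. -/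
open Set

/-- If the image ℱ of the Marczewski map of a countable clopen ω-cover {Uₙ : n}
decomposes as ⋃ₙ ℱₙ with each ℱₙ having a pseudo-intersection Aₙ, then the families
𝒰_{n,m} = {U_k : k ∈ Aₙ, k ≥ m} are infinite subsets of the cover and
{⋂𝒰_{n,m} : n,m ∈ ℕ} is a cover of X. -/
theorem stmt17 {α : Type*} [TopologicalSpace α] (U : ℕ → Set α)
    (hinj : Function.Injective U)
    (hclopen : ∀ n, IsClopen (U n))
    (hne : ∀ n, U n ≠ univ)
    (hω : ∀ F : Set α, F.Finite → ∃ n, F ⊆ U n)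
    (𝒢 : ℕ → Set (Set ℕ)) (A : ℕ → Set ℕ)
    (hdecomp : (⋃ n, 𝒢 n) = {S : Set ℕ | ∃ x : α, S = {k | x ∈ U k}})
    (hA : ∀ n, (A n).Infinite ∧ ∀ B ∈ 𝒢 n, (A n \ B).Finite) :
    (∀ n m : ℕ, U '' {k ∈ A n | m ≤ k} ⊆ Set.range U ∧ (U '' {k ∈ A n | m ≤ k}).Infinite) ∧
    IsCover {S : Set α | ∃ n m : ℕ, S = ⋂₀ (U '' {k ∈ A n | m ≤ k})} := by
  have hinf : ∀ n m : ℕ, ({k ∈ A n | m ≤ k} : Set ℕ).Infinite := by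
    intro n m
    have : {k ∈ A n | m ≤ k} = A n \ {k | k < m} := by
      ext k; simp only [mem_setOf_eq, mem_diff, mem_sep_iff, not_lt]
    rw [this]
    exact (hA n).1.diff (Set.finite_Iio m)
  constructor
  · intro n m
    refine ⟨image_subset_range U _, Set.Infinite.image ?_ (hinf n m)⟩
    exact fun a _ b _ h => hinj h
  constructor
  · rintro ⟨n, m, hS⟩
    obtain ⟨k, hk⟩ := (hinf n m).nonempty
    have : ⋂₀ (U '' {k ∈ A n | m ≤ k}) ⊆ U k :=
      sInter_subset_of_mem ⟨k, hk, rfl⟩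
    exact hne k (univ_subset_iff.mp (hS ▸ this))
  · rw [sUnion_eq_univ_iff]
    intro x
    have hmem : {k | x ∈ U k} ∈ ⋃ n, 𝒢 n := by
      rw [hdecomp]; exact ⟨x, rfl⟩
    obtain ⟨n, hn⟩ := mem_iUnion.mp hmem
    have hfin : (A n \ {k | x ∈ U k}).Finite := (hA n).2 _ hn
    obtain ⟨m, hm⟩ := hfin.bddAbove
    refine ⟨_, ⟨n, m + 1, rfl⟩, ?_⟩
    rintro S ⟨k, ⟨hkA, hkm⟩, rfl⟩
    by_contra hx
    exact absurd (hm ⟨hkA, hx⟩) (by omega)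
end

section
/- ∩_∞(Ω,Γ) = (Ω choose Γ) ∩ ∩_∞(Γ,Γ): a space X satisfies 'for every sequence of open ω-covers (𝒰ₙ) there are infinite 𝒱ₙ ⊆ 𝒰ₙ with {⋂𝒱ₙ : n} a γ-cover' if and only if X satisfies both 'every open ω-cover contains a γ-cover' and 'for every sequence of open γ-covers (𝒰ₙ) there are infinite 𝒱ₙ ⊆ 𝒰ₙ with {⋂𝒱ₙ : n} a γ-cover'. -/
open Set

/-- Every γ-cover is an ω-cover. -/
lemma gamma_isOmega {α : Type*} {𝒰 : Set (Set α)} (h : IsGammaCover 𝒰) :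
    IsOmegaCover 𝒰 := by
  refine ⟨h.2.1, fun F hF => ?_⟩
  have hB : (⋃ x ∈ F, {U ∈ 𝒰 | x ∉ U}).Finite := hF.biUnion fun x _ => h.2.2 x
  obtain ⟨U, hU⟩ := (h.1.diff hB).nonempty
  refine ⟨U, hU.1, fun x hx => ?_⟩
  by_contra hxU
  exact hU.2 (mem_biUnion hx ⟨hU.1, hxU⟩)

/-- From a sequence of infinite sets one can pick an injective choice. -/
lemma exists_inj_mem {α : Type*} (𝒱 : ℕ → Set (Set α)) (h : ∀ n, (𝒱 n).Infinite) :
    ∃ f : ℕ → Set α, (∀ n, f n ∈ 𝒱 n) ∧ Function.Injective f := by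
  classical
  choose g hg1 hg2 using fun n (s : Finset (Set α)) => (h n).exists_notMem_finset s
  set F : ℕ → Finset (Set α) := fun n => Nat.rec ∅ (fun k ih => insert (g k ih) ih) n with hF
  have hFsucc : ∀ n, F (n + 1) = insert (g n (F n)) (F n) := fun n => rfl
  have hmono : ∀ m n, m ≤ n → F m ⊆ F n := by
    intro m n hmn
    induction hmn with
    | refl => exact Finset.Subset.refl _
    | step h' ih => exact ih.trans (by rw [hFsucc]; exact Finset.subset_insert _ _)
  have key : ∀ a b, a < b → g a (F a) ≠ g b (F b) := by
    intro a b hab hEq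
    have h1 : g a (F a) ∈ F (a + 1) := by rw [hFsucc]; exact Finset.mem_insert_self _ _
    have h2 : g a (F a) ∈ F b := hmono _ _ hab h1
    exact hg2 b (F b) (hEq ▸ h2)
  refine ⟨fun n => g n (F n), fun n => hg1 _ _, fun a b hab => ?_⟩
  rcases lt_trichotomy a b with h' | h' | h'
  · exact absurd hab (key a b h')
  · exact h'
  · exact absurd hab.symm (key b a h')

/-- ∩_∞(Ω,Γ) = (Ω choose Γ) ∩ ∩_∞(Γ,Γ). -/
theorem stmt18 {α : Type*} [TopologicalSpace α] :
    (∀ 𝒰 : ℕ → Set (Set α),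
      (∀ n, (∀ U ∈ 𝒰 n, IsOpen U) ∧ IsOmegaCover (𝒰 n)) →
      ∃ 𝒱 : ℕ → Set (Set α), (∀ n, 𝒱 n ⊆ 𝒰 n ∧ (𝒱 n).Infinite) ∧
        IsGammaCover (Set.range fun n => ⋂₀ 𝒱 n)) ↔
    ((∀ 𝒰 : Set (Set α), (∀ U ∈ 𝒰, IsOpen U) → IsOmegaCover 𝒰 →
        ∃ 𝒲 ⊆ 𝒰, IsGammaCover 𝒲) ∧
     (∀ 𝒰 : ℕ → Set (Set α),
      (∀ n, (∀ U ∈ 𝒰 n, IsOpen U) ∧ IsGammaCover (𝒰 n)) →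
      ∃ 𝒱 : ℕ → Set (Set α), (∀ n, 𝒱 n ⊆ 𝒰 n ∧ (𝒱 n).Infinite) ∧
        IsGammaCover (Set.range fun n => ⋂₀ 𝒱 n))) := by
  constructor
  · intro H
    constructor
    · -- (Ω choose Γ)
      intro 𝒰 hopen hω
      obtain ⟨𝒱, h𝒱, hγ⟩ := H (fun _ => 𝒰) (fun _ => ⟨hopen, hω⟩)
      obtain ⟨f, hf1, hf2⟩ := exists_inj_mem 𝒱 (fun n => (h𝒱 n).2)
      set Φ : ℕ → Set α := fun n => ⋂₀ 𝒱 n with hΦ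
      classical
      set I : Set ℕ := {n | ∀ m, m < n → Φ m ≠ Φ n} with hI
      have hrange : range Φ ⊆ Φ '' I := by
        rintro S ⟨n, rfl⟩
        have hex : ∃ m, Φ m = Φ n := ⟨n, rfl⟩
        refine ⟨Nat.find hex, fun m hm hEq => Nat.find_min hex hm (hEq.trans (Nat.find_spec hex)), (Nat.find_spec hex)⟩
      have hIinf : I.Infinite := by
        intro hfin
        exact hγ.1 (((hfin.image Φ).subset hrange).subset (subset_refl _))
      have hinj : InjOn Φ I := by
        intro m hm n hn hmn
        rcases lt_trichotomy m n with h' | h' | h'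
        · exact absurd hmn (hn m h')
        · exact h'
        · exact absurd hmn.symm (hm n h')
      refine ⟨f '' I, ?_, ?_, ?_, ?_⟩
      · rintro U ⟨n, _, rfl⟩
        exact (h𝒱 n).1 (hf1 n)
      · exact hIinf.image (hf2.injOn)
      · rintro ⟨n, _, hEq⟩
        exact hω.1 (hEq ▸ (h𝒱 n).1 (hf1 n))
      · intro x
        have hT : {S ∈ range Φ | x ∉ S}.Finite := hγ.2.2 x
        have hfin : (I ∩ {n | x ∉ Φ n}).Finite := by
          refine Finite.of_finite_image (hT.subset ?_) (hinj.mono inter_subset_left)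
          rintro S ⟨n, ⟨hnI, hx⟩, rfl⟩
          exact ⟨⟨n, rfl⟩, hx⟩
        refine (hfin.image f).subset ?_
        rintro U ⟨⟨n, hnI, rfl⟩, hxU⟩
        refine ⟨n, ⟨hnI, fun hx => hxU (hx _ (hf1 n))⟩, rfl⟩
    · -- ∩_∞(Γ,Γ)
      intro 𝒰 h
      exact H 𝒰 fun n => ⟨(h n).1, gamma_isOmega (h n).2⟩
  · rintro ⟨h1, h2⟩ 𝒰 h
    choose 𝒲 h𝒲sub h𝒲γ using fun n => h1 (𝒰 n) (h n).1 (h n).2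
    obtain ⟨𝒱, h𝒱, hγ⟩ := h2 𝒲 (fun n =>
      ⟨fun U hU => (h n).1 U (h𝒲sub n hU), h𝒲γ n⟩)
    exact ⟨𝒱, fun n => ⟨(h𝒱 n).1.trans (h𝒲sub n), (h𝒱 n).2⟩, hγ⟩
end
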